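/- arXiv:2010.07880 — 5 statements merged into one kernel-verified Lean document; each statement's English description precedes it below -/
import Mathlib

section
/- Let f: [0,1] → ℝ be càdlàg with f(0)=0 and let 0 ≤ t < t′. Define g(s) = f(s) - t·s and g′(s) = f(s) - t′·s, and let L(t) denote the closure of the set {s ∈ [0,1] : g(s) = inf_{u∈[0,s]} g(u)} (and similarly L(t′) for g′). Then L(t) ⊆ L(t′). -/
open Set Filter Topology

/-!
A ladder time `s` of `g t := fun u => f u - t * u` is a point where `g t` attains its minimum
over `[0, s]`. Passing to the larger drift `t'` lowers `g t s` by `(t' - t) * s` and each earlier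
value `g t u` by only `(t' - t) * u ≤ (t' - t) * s`, so `s` remains a minimum point and the
ladder sets are nested even before taking closures. The only analytic input is that the infima
are genuine minima rather than junk values of `sInf`, i.e. that a càdlàg function is bounded
below on `[0, 1]`.
-/

theorem IsCompact.bddBelow_image_of_forall_eventually {X α : Type*} [TopologicalSpace X]
    [LinearOrder α] [Nonempty α] {K : Set X} (hK : IsCompact K) {f : X → α}
    (h : ∀ x ∈ K, ∃ c, ∀ᶠ u in 𝓝 x, u ∈ K → c ≤ f u) : BddBelow (f '' K) := by
  refine hK.induction_on (by simp) (fun s t hst ht => ht.mono (image_mono hst))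
    (fun s t hs ht => by rw [image_union]; exact hs.union ht) fun x hx => ?_
  obtain ⟨c, hc⟩ := h x hx
  refine ⟨K ∩ {u | u ∈ K → c ≤ f u}, inter_mem self_mem_nhdsWithin
    (mem_nhdsWithin_of_mem_nhds hc), c, ?_⟩
  rintro _ ⟨u, ⟨huK, hu⟩, rfl⟩
  exact hu huK

theorem IsCompact.bddBelow_image_sub {X : Type*} [TopologicalSpace X] {K : Set X}
    (hK : IsCompact K) {f g : X → ℝ} (hf : BddBelow (f '' K)) (hg : ContinuousOn g K) :
    BddBelow ((fun u => f u - g u) '' K) := by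
  obtain ⟨m, hm⟩ := hf
  obtain ⟨M, hM⟩ := hK.bddAbove_image hg
  refine ⟨m - M, ?_⟩
  rintro _ ⟨u, hu, rfl⟩
  linarith [hm (mem_image_of_mem f hu), hM (mem_image_of_mem g hu)]

section Cadlag

variable {f : ℝ → ℝ} {a b x : ℝ}

theorem exists_eventually_nhdsGE_le_of_continuousWithinAt
    (hrc : ∀ s ∈ Ico a b, ContinuousWithinAt f (Ici s) s) (hx : x ∈ Icc a b) :
    ∃ c, ∀ᶠ u in 𝓝[≥] x, u ∈ Icc a b → c ≤ f u := by
  rcases hx.2.eq_or_lt with rfl | hxb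
  · exact ⟨f x, eventually_nhdsWithin_of_forall fun u (hu : x ≤ u) huK => by
      rw [le_antisymm huK.2 hu]⟩
  · exact ⟨f x - 1, ((hrc x ⟨hx.1, hxb⟩).eventually
      (eventually_ge_nhds (sub_one_lt _))).mono fun u hu _ => hu⟩

theorem exists_eventually_nhdsLT_le_of_tendsto
    (hll : ∀ s ∈ Ioc a b, ∃ l, Tendsto f (𝓝[<] s) (𝓝 l)) (hx : x ∈ Icc a b) :
    ∃ c, ∀ᶠ u in 𝓝[<] x, u ∈ Icc a b → c ≤ f u := by
  rcases hx.1.eq_or_lt with rfl | hax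
  · exact ⟨f a, eventually_nhdsWithin_of_forall fun u (hu : u < a) huK =>
      absurd huK.1 hu.not_ge⟩
  · obtain ⟨l, hl⟩ := hll x ⟨hax, hx.2⟩
    exact ⟨l - 1, (hl.eventually (eventually_ge_nhds (sub_one_lt _))).mono fun u hu _ => hu⟩

theorem bddBelow_image_Icc_of_cadlag
    (hrc : ∀ s ∈ Ico a b, ContinuousWithinAt f (Ici s) s)
    (hll : ∀ s ∈ Ioc a b, ∃ l, Tendsto f (𝓝[<] s) (𝓝 l)) :
    BddBelow (f '' Icc a b) := by
  refine isCompact_Icc.bddBelow_image_of_forall_eventually fun x hx => ?_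
  obtain ⟨c₁, h₁⟩ := exists_eventually_nhdsLT_le_of_tendsto hll hx
  obtain ⟨c₂, h₂⟩ := exists_eventually_nhdsGE_le_of_continuousWithinAt hrc hx
  refine ⟨min c₁ c₂, ?_⟩
  rw [← nhdsLT_sup_nhdsGE, eventually_sup]
  exact ⟨h₁.mono fun u hu huK => (min_le_left _ _).trans (hu huK),
    h₂.mono fun u hu huK => (min_le_right _ _).trans (hu huK)⟩

end Cadlag

theorem isLeast_image_Icc_of_eq_csInf {g : ℝ → ℝ} {a s : ℝ} (has : a ≤ s)
    (hbdd : BddBelow (g '' Icc a s)) (hs : g s = sInf (g '' Icc a s)) :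
    IsLeast (g '' Icc a s) (g s) :=
  ⟨mem_image_of_mem g ⟨has, le_rfl⟩, fun _ hy => hs ▸ csInf_le hbdd hy⟩

theorem IsLeast.image_Icc_sub_mul_of_le {f : ℝ → ℝ} {a s t t' : ℝ} (has : a ≤ s)
    (htt' : t ≤ t')
    (h : IsLeast ((fun u => f u - t * u) '' Icc a s) (f s - t * s)) :
    IsLeast ((fun u => f u - t' * u) '' Icc a s) (f s - t' * s) := by
  refine ⟨mem_image_of_mem _ (right_mem_Icc.2 has), ?_⟩
  rintro _ ⟨u, hu, rfl⟩
  have hmin : f s - t * s ≤ f u - t * u := h.2 (mem_image_of_mem _ hu)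
  have hdrift : (t' - t) * u ≤ (t' - t) * s := mul_le_mul_of_nonneg_left hu.2 (sub_nonneg.2 htt')
  linarith

theorem stmt_2_general (f : ℝ → ℝ)
    (hrc : ∀ s ∈ Ico (0:ℝ) 1, ContinuousWithinAt f (Ici s) s)
    (hll : ∀ s ∈ Ioc (0:ℝ) 1, ∃ l, Tendsto f (𝓝[<] s) (𝓝 l))
    (t t' : ℝ) (htt' : t < t') :
    closure {s ∈ Icc (0:ℝ) 1 |
        f s - t * s = sInf ((fun u => f u - t * u) '' Icc 0 s)} ⊆
      closure {s ∈ Icc (0:ℝ) 1 |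
        f s - t' * s = sInf ((fun u => f u - t' * u) '' Icc 0 s)} := by
  have hbdd : ∀ s ∈ Icc (0:ℝ) 1, BddBelow ((fun u => f u - t * u) '' Icc 0 s) := fun s hs =>
    (isCompact_Icc.bddBelow_image_sub (bddBelow_image_Icc_of_cadlag hrc hll)
      (continuous_const_mul t).continuousOn).mono (image_mono (Icc_subset_Icc_right hs.2))
  refine closure_mono fun s ⟨hs, hmin⟩ => ⟨hs, ?_⟩
  have hleast := isLeast_image_Icc_of_eq_csInf (g := fun u => f u - t * u) hs.1 (hbdd s hs) hmin
  exact (hleast.image_Icc_sub_mul_of_le hs.1 htt'.le).csInf_eq.symm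

/-- For càdlàg `f : [0,1] → ℝ` with `f 0 = 0` and drifts `0 ≤ t < t'`,
the ladder time set of `s ↦ f s - t s` is contained in that of `s ↦ f s - t' s`. -/
theorem stmt_2 (f : ℝ → ℝ)
    (hrc : ∀ s ∈ Ico (0:ℝ) 1, ContinuousWithinAt f (Ici s) s)
    (hll : ∀ s ∈ Ioc (0:ℝ) 1, ∃ l, Tendsto f (𝓝[<] s) (𝓝 l))
    (h0 : f 0 = 0)
    (t t' : ℝ) (ht : 0 ≤ t) (htt' : t < t') :
    closure {s ∈ Icc (0:ℝ) 1 |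
        f s - t * s = sInf ((fun u => f u - t * u) '' Icc 0 s)} ⊆
      closure {s ∈ Icc (0:ℝ) 1 |
        f s - t' * s = sInf ((fun u => f u - t' * u) '' Icc 0 s)} :=
  stmt_2_general f hrc hll t t' htt'
end

section
/- Let μ be a critical offspring distribution and let W^prim be the Prim path of a μ-Galton–Watson tree whose edges carry i.i.d. positive weights independent of the tree. Then W^prim has the same distribution as (X(0), X(1), ..., X(ζ₁)), where X is a random walk started at 0 with step distribution μ̂(k) = μ(k+1) on {-1,0,1,...} and ζ₁ = inf{k ≥ 0 : X(k) = -1}. In particular the total progeny of the tree has the same law as ζ₁. -/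
/-!
Fix a Łukasiewicz path `p` of length `n` whose steps code the child counts `c 0, …, c (n-1)`,
and for a plane tree `τ` let `S τ` be the set of weights under which the Prim order of `τ` has
child counts `c`. Almost surely, if the Prim path of `T` is `p`, then `T` is a plane tree `τ`
with `n` vertices and the weights lie in `S τ`. For such `τ`, `P(T = τ) = ∏ μ(c k)` (reorder
the product along the Prim order), and the weights are independent of `T`, so
`P(Prim path = p) ≤ ∏ μ(c k) · Σ_τ P(weights ∈ S τ)`. For injective weights the tree is
recovered from the weights and `c`, so the events `weights ∈ S τ` are almost surely disjoint
and `P(Prim path = p) ≤ ∏ μ(c k)`. The right-hand side is the probability that the first `n`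
steps of the walk code `c`, which forces the stopped walk to equal `p`.

Hence the law of the stopped Prim path is dominated, atom by atom, by that of the stopped walk
on the countable set of Łukasiewicz paths, which carries it; two probability measures in this
situation agree. The total progeny is the first visit of the Prim path to `-1`.
-/

open MeasureTheory ProbabilityTheory Set Filter Topology

instance : MeasurableSpace (Finset (List ℕ)) := ⊤

/-- A finite plane tree in Ulam–Harris labelling: vertices are lists of integers (a child
`i :: u` of `u` for each `i < c(u)`), the root is `[]`. -/
def IsPlaneTree (τ : Finset (List ℕ)) : Prop :=
  [] ∈ τ ∧ (∀ v ∈ τ, v.tail ∈ τ) ∧ ∀ (u : List ℕ) (i : ℕ), (i + 1) :: u ∈ τ → i :: u ∈ τ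

/-- Number of children of `u` in the plane tree `τ`. -/
def childCount (τ : Finset (List ℕ)) (u : List ℕ) : ℕ :=
  (τ.filter fun v => v ≠ [] ∧ v.tail = u).card

/-- `u` lists the vertices of `τ` in the Prim order associated with the edge weights `w`
(the weight of the edge joining a nonroot vertex `v` to its parent is `w v`): it starts
at the root, and at each step visits the unvisited vertex whose edge to the already
visited set has minimal weight. -/
def IsPrimOrder (τ : Finset (List ℕ)) (w : List ℕ → ℝ) (u : ℕ → List ℕ) : Prop :=
  u 0 = [] ∧
  (∀ k < τ.card, u k ∈ τ) ∧
  (∀ j k, j < τ.card → k < τ.card → u j = u k → j = k) ∧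
  ∀ k, 0 < k → k < τ.card →
    (∃ m < k, (u k).tail = u m) ∧
    ∀ v ∈ τ, (∀ m < k, u m ≠ v) → (∃ m < k, v.tail = u m) → w (u k) ≤ w v

namespace IsPlaneTree

variable {τ : Finset (List ℕ)}

lemma cons_mem_of_le (hτ : IsPlaneTree τ) {u : List ℕ} {i j : ℕ} (hji : j ≤ i) (hi : i :: u ∈ τ) :
    j :: u ∈ τ := by
  induction i, hji using Nat.le_induction with
  | base => exact hi
  | succ i _ ih => exact ih (hτ.2.2 u i hi)

lemma cons_mem_iff (hτ : IsPlaneTree τ) {u : List ℕ} {i : ℕ} :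
    i :: u ∈ τ ↔ i < childCount τ u := by
  constructor
  · intro hi
    have hsub : (Finset.range (i + 1)).image (· :: u) ⊆ τ.filter fun v => v ≠ [] ∧ v.tail = u := by
      intro v hv
      obtain ⟨j, hj, rfl⟩ := Finset.mem_image.1 hv
      simpa using hτ.cons_mem_of_le (Nat.lt_succ_iff.1 (Finset.mem_range.1 hj)) hi
    have := Finset.card_le_card hsub
    rwa [Finset.card_image_of_injective _ fun _ _ h => (List.cons.inj h).1,
      Finset.card_range] at this
  · intro hi
    by_contra hni
    have hsub : (τ.filter fun v => v ≠ [] ∧ v.tail = u) ⊆ (Finset.range i).image (· :: u) := by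
      intro v hv
      obtain ⟨hvτ, hvne, rfl⟩ := Finset.mem_filter.1 hv
      obtain _ | ⟨j, l⟩ := v
      · exact absurd rfl hvne
      refine Finset.mem_image.2 ⟨j, Finset.mem_range.2 ?_, rfl⟩
      by_contra hij
      exact hni (hτ.cons_mem_of_le (not_lt.1 hij) hvτ)
    have := (Finset.card_le_card hsub).trans Finset.card_image_le
    rw [Finset.card_range] at this
    exact absurd hi (not_lt.2 this)

end IsPlaneTree

lemma sum_childCount_eq_card_filter (τ V : Finset (List ℕ)) :
    ∑ v ∈ V, childCount τ v = (τ.filter fun v => v ≠ [] ∧ v.tail ∈ V).card := by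
  rw [Finset.card_eq_sum_card_fiberwise (f := List.tail) (t := V)
    fun v hv => (Finset.mem_filter.1 hv).2.2]
  refine Finset.sum_congr rfl fun u hu => ?_
  rw [childCount, Finset.filter_filter]
  congr 1
  refine Finset.filter_congr fun v _ => ?_
  constructor
  · rintro ⟨hv, rfl⟩
    exact ⟨⟨hv, hu⟩, rfl⟩
  · rintro ⟨⟨hv, -⟩, rfl⟩
    exact ⟨hv, rfl⟩

lemma IsPlaneTree.sum_childCount {τ : Finset (List ℕ)} (hτ : IsPlaneTree τ) :
    ∑ v ∈ τ, childCount τ v = τ.card - 1 := by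
  rw [sum_childCount_eq_card_filter, ← Finset.card_erase_of_mem hτ.1]
  congr 1
  ext v
  simp only [Finset.mem_filter, Finset.mem_erase]
  exact ⟨fun h => ⟨h.2.1, h.1⟩, fun h => ⟨h.2, h.1, hτ.2.1 v h.2⟩⟩

namespace IsPrimOrder

variable {τ τ' : Finset (List ℕ)} {x : List ℕ → ℝ} {u u' : ℕ → List ℕ}

lemma injOn (hu : IsPrimOrder τ x u) : Set.InjOn u (Finset.range τ.card) :=
  fun j hj k hk h => hu.2.2.1 j k (Finset.mem_range.1 hj) (Finset.mem_range.1 hk) h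

lemma image_range (hu : IsPrimOrder τ x u) : (Finset.range τ.card).image u = τ := by
  refine Finset.eq_of_subset_of_card_le ?_ ?_
  · intro v hv
    obtain ⟨k, hk, rfl⟩ := Finset.mem_image.1 hv
    exact hu.2.1 k (Finset.mem_range.1 hk)
  · rw [Finset.card_image_of_injOn hu.injOn, Finset.card_range]

@[to_additive]
lemma prod_comp {M : Type*} [CommMonoid M] (hu : IsPrimOrder τ x u) (f : List ℕ → M) :
    ∏ k ∈ Finset.range τ.card, f (u k) = ∏ v ∈ τ, f v := by
  rw [← Finset.prod_image hu.injOn, hu.image_range]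

lemma sum_childCount (hτ : IsPlaneTree τ) (hu : IsPrimOrder τ x u) :
    ∑ k ∈ Finset.range τ.card, childCount τ (u k) = τ.card - 1 := by
  rw [hu.sum_comp, hτ.sum_childCount]

/-- The vertices `u 1, …, u k` are children of `u 0, …, u (k - 1)`. -/
lemma le_sum_childCount (hu : IsPrimOrder τ x u) {k : ℕ} (hk : k < τ.card) :
    k ≤ ∑ i ∈ Finset.range k, childCount τ (u i) := by
  have hinj : Set.InjOn u (Finset.range k) :=
    hu.injOn.mono (Finset.coe_subset.2 (Finset.range_subset_range.2 hk.le))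
  rw [← Finset.sum_image hinj, sum_childCount_eq_card_filter]
  have hsub : (Finset.Icc 1 k).image u ⊆
      τ.filter fun v => v ≠ [] ∧ v.tail ∈ (Finset.range k).image u := by
    intro v hv
    obtain ⟨j, hj, rfl⟩ := Finset.mem_image.1 hv
    obtain ⟨hj1, hjk⟩ := Finset.mem_Icc.1 hj
    have hjτ : j < τ.card := hjk.trans_lt hk
    obtain ⟨m, hm, hmj⟩ := (hu.2.2.2 j hj1 hjτ).1
    refine Finset.mem_filter.2 ⟨hu.2.1 j hjτ, fun h0 => ?_,
      Finset.mem_image.2 ⟨m, Finset.mem_range.2 (hm.trans_le hjk), hmj.symm⟩⟩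
    have := hu.2.2.1 j 0 hjτ (by omega) (h0.trans hu.1.symm)
    omega
  have hcard : ((Finset.Icc 1 k).image u).card = k := by
    rw [Finset.card_image_of_injOn, Nat.card_Icc, Nat.add_sub_cancel]
    exact hu.injOn.mono fun j hj => by
      simp only [Finset.coe_Icc, Set.mem_Icc, Finset.coe_range, Set.mem_Iio] at hj ⊢
      omega
  exact hcard.ge.trans (Finset.card_le_card hsub)

lemma of_eqOn (hu : IsPrimOrder τ x u) (h : ∀ k < τ.card, u' k = u k) (h0 : u' 0 = []) :
    IsPrimOrder τ x u' := by
  obtain ⟨-, hmem, hinj, hstep⟩ := hu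
  refine ⟨h0, fun k hk => h k hk ▸ hmem k hk,
    fun j k hj hk => by rw [h j hj, h k hk]; exact hinj j k hj hk, fun k hk0 hk => ?_⟩
  have hlt : ∀ m < k, u' m = u m := fun m hm => h m (hm.trans hk)
  obtain ⟨⟨m, hm, hmk⟩, hmin⟩ := hstep k hk0 hk
  refine ⟨⟨m, hm, by rw [h k hk, hlt m hm, hmk]⟩, fun v hv hvis hpar => ?_⟩
  rw [h k hk]
  refine hmin v hv (fun m hm => hlt m hm ▸ hvis m hm) ?_
  obtain ⟨m, hm, hmv⟩ := hpar
  exact ⟨m, hm, hlt m hm ▸ hmv⟩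

lemma exists_eq_cons (hτ : IsPlaneTree τ) (hu : IsPrimOrder τ x u) {k : ℕ} (hk0 : 0 < k)
    (hk : k < τ.card) : ∃ m < k, ∃ i < childCount τ (u m), u k = i :: u m := by
  obtain ⟨m, hm, hmk⟩ := (hu.2.2.2 k hk0 hk).1
  have hne : u k ≠ [] := fun h0 =>
    hk0.ne' (hu.2.2.1 k 0 hk (hk0.trans hk) (h0.trans hu.1.symm))
  cases hv : u k with
  | nil => exact absurd hv hne
  | cons i l =>
    rw [hv, List.tail_cons] at hmk
    subst hmk
    exact ⟨m, hm, i, hτ.cons_mem_iff.1 (hv ▸ hu.2.1 k hk), rfl⟩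

/-- The `(k + 1)`-st vertex of `u` is a candidate for the `(k + 1)`-st step of `u'`. -/
lemma weight_succ_le (hτ : IsPlaneTree τ) (hτ' : IsPlaneTree τ') (hu : IsPrimOrder τ x u)
    (hu' : IsPrimOrder τ' x u') (hcard : τ.card = τ'.card) {k : ℕ} (hk : k + 1 < τ.card)
    (heq : ∀ j ≤ k, u j = u' j) (hc : ∀ j ≤ k, childCount τ (u j) = childCount τ' (u' j)) :
    x (u' (k + 1)) ≤ x (u (k + 1)) := by
  obtain ⟨m, hm, i, hi, hcons⟩ := hu.exists_eq_cons hτ k.succ_pos hk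
  have hmk : m ≤ k := Nat.lt_succ_iff.1 hm
  refine (hu'.2.2.2 (k + 1) k.succ_pos (hcard ▸ hk)).2 (u (k + 1)) ?_ ?_ ?_
  · rw [hcons, heq m hmk, hτ'.cons_mem_iff, ← hc m hmk]
    exact hi
  · intro j hj h
    rw [← heq j (Nat.lt_succ_iff.1 hj)] at h
    exact hj.ne (hu.2.2.1 j (k + 1) (hj.trans hk) hk h)
  · exact ⟨m, hm, by rw [hcons, List.tail_cons, heq m hmk]⟩

theorem eq_of_childCount_eq (hτ : IsPlaneTree τ) (hτ' : IsPlaneTree τ') (hx : Function.Injective x)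
    (hu : IsPrimOrder τ x u) (hu' : IsPrimOrder τ' x u') (hcard : τ.card = τ'.card)
    (hc : ∀ k < τ.card, childCount τ (u k) = childCount τ' (u' k)) : τ = τ' := by
  have heq : ∀ k < τ.card, u k = u' k := by
    intro k
    induction k using Nat.strong_induction_on with
    | _ k ih =>
      intro hk
      obtain _ | k := k
      · exact hu.1.trans hu'.1.symm
      have hprev : ∀ j ≤ k, u j = u' j := fun j hj => ih j (by omega) (by omega)
      have hcprev : ∀ j ≤ k, childCount τ (u j) = childCount τ' (u' j) :=
        fun j hj => hc j (by omega)
      exact hx (le_antisymm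
        (hu'.weight_succ_le hτ' hτ hu hcard.symm (hcard ▸ hk) (fun j hj => (hprev j hj).symm)
          fun j hj => (hcprev j hj).symm)
        (hu.weight_succ_le hτ hτ' hu' hcard hk hprev hcprev))
  rw [← hu.image_range, ← hu'.image_range, ← hcard]
  exact Finset.image_congr fun k hk => heq k (Finset.mem_range.1 hk)

end IsPrimOrder

def primCountWeights (τ : Finset (List ℕ)) (c : ℕ → ℕ) : Set (List ℕ → ℝ) :=
  {x | ∃ u, IsPrimOrder τ x u ∧ ∀ k < τ.card, childCount τ (u k) = c k}

lemma measurableSet_primCountWeights (τ : Finset (List ℕ)) (c : ℕ → ℕ) :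
    MeasurableSet (primCountWeights τ c) := by
  let extend (f : Fin τ.card → List ℕ) (k : ℕ) : List ℕ := if h : k < τ.card then f ⟨k, h⟩ else []
  have hcount : primCountWeights τ c = {x | ∃ f : Fin τ.card → List ℕ,
      IsPrimOrder τ x (extend f) ∧ ∀ k < τ.card, childCount τ (extend f k) = c k} := by
    ext x
    refine ⟨fun ⟨u, hu, hc⟩ => ⟨fun k => u k, ?_⟩, fun ⟨f, hf⟩ => ⟨extend f, hf⟩⟩
    have h : ∀ k < τ.card, extend (fun k => u k) k = u k := fun k hk => dif_pos hk
    refine ⟨hu.of_eqOn h ?_, fun k hk => h k hk ▸ hc k hk⟩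
    by_cases h0 : 0 < τ.card
    · exact (h 0 h0).trans hu.1
    · exact dif_neg h0
  rw [hcount]
  unfold IsPrimOrder
  measurability

theorem eq_of_mem_primCountWeights {τ τ' : Finset (List ℕ)} {c : ℕ → ℕ} {x : List ℕ → ℝ}
    (hτ : IsPlaneTree τ) (hτ' : IsPlaneTree τ') (hcard : τ.card = τ'.card)
    (hx : Function.Injective x) (h : x ∈ primCountWeights τ c) (h' : x ∈ primCountWeights τ' c) :
    τ = τ' := by
  obtain ⟨u, hu, hc⟩ := h
  obtain ⟨u', hu', hc'⟩ := h'
  exact hu.eq_of_childCount_eq hτ hτ' hx hu' hcard fun k hk =>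
    (hc k hk).trans (hc' k (hcard ▸ hk)).symm

structure IsLukasiewiczPath (p : ℕ → ℤ) (n : ℕ) : Prop where
  zero : p 0 = 0
  nonneg : ∀ k < n, 0 ≤ p k
  eq_neg_one : ∀ k, n ≤ k → p k = -1
  le_step : ∀ k < n, -1 ≤ p (k + 1) - p k

/-- A step `s` of a Łukasiewicz path codes a vertex with `s + 1` children. -/
def stepCount (p : ℕ → ℤ) (k : ℕ) : ℕ := (p (k + 1) - p k + 1).toNat

namespace IsLukasiewiczPath

variable {p : ℕ → ℤ} {n : ℕ}

lemma stepCount_cast (hp : IsLukasiewiczPath p n) {k : ℕ} (hk : k < n) :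
    (stepCount p k : ℤ) = p (k + 1) - p k + 1 :=
  Int.toNat_of_nonneg (by linarith [hp.le_step k hk])

lemma isLeast (hp : IsLukasiewiczPath p n) : IsLeast {k | p k = -1} n :=
  ⟨hp.eq_neg_one n le_rfl, fun k (hk : p k = -1) => not_lt.1 fun hkn => by
    have := hp.nonneg k hkn
    omega⟩

lemma sInf_eq (hp : IsLukasiewiczPath p n) : sInf {k | p k = -1} = n :=
  hp.isLeast.csInf_eq

lemma length_eq {m : ℕ} (hp : IsLukasiewiczPath p n) (hm : IsLukasiewiczPath p m) : n = m :=
  hp.sInf_eq.symm.trans hm.sInf_eq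

lemma stopped_walk_eq (hp : IsLukasiewiczPath p n) {e : ℕ → ℕ} {X : ℕ → ℤ}
    (hX : ∀ k, X k = ∑ i ∈ Finset.range k, ((e i : ℤ) - 1)) (he : ∀ i < n, e i = stepCount p i) :
    (fun k => X (min k (sInf {k | X k = -1}))) = p := by
  have hXp : ∀ k ≤ n, X k = p k := by
    intro k hk
    induction k with
    | zero => simp [hX, hp.zero]
    | succ k ih =>
      have hstep : X (k + 1) = X k + ((e k : ℤ) - 1) := by
        rw [hX, hX, Finset.sum_range_succ]
      rw [hstep, ih (by omega), he k hk, hp.stepCount_cast hk]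
      ring
  have hhit : sInf {k | X k = -1} = n := IsLeast.csInf_eq
    ⟨(hXp n le_rfl).trans (hp.eq_neg_one n le_rfl), fun k (hk : X k = -1) => not_lt.1 fun hkn => by
      have := hp.nonneg k hkn
      rw [hXp k hkn.le] at hk
      omega⟩
  funext k
  rw [hhit]
  rcases le_total k n with hkn | hnk
  · rw [min_eq_left hkn, hXp k hkn]
  · rw [min_eq_right hnk, hXp n le_rfl, hp.eq_neg_one n le_rfl, hp.eq_neg_one k hnk]

end IsLukasiewiczPath

lemma countable_setOf_isLukasiewiczPath :
    {p : ℕ → ℤ | ∃ n, IsLukasiewiczPath p n}.Countable := by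
  refine (Set.countable_iUnion fun n => Set.countable_range
    fun q : Fin n → ℤ => fun k => if h : k < n then q ⟨k, h⟩ else -1).mono ?_
  rintro p ⟨n, hp⟩
  refine Set.mem_iUnion.2 ⟨n, fun i => p i, funext fun k => ?_⟩
  dsimp only
  split_ifs with hk
  · rfl
  · exact (hp.eq_neg_one k (not_lt.1 hk)).symm

lemma IsPrimOrder.isLukasiewiczPath {τ : Finset (List ℕ)} {x : List ℕ → ℝ} {u : ℕ → List ℕ}
    (hτ : IsPlaneTree τ) (hu : IsPrimOrder τ x u) {W : ℕ → ℤ} (hW0 : W 0 = 0)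
    (hW : ∀ k < τ.card, W (k + 1) = W k + childCount τ (u k) - 1) :
    IsLukasiewiczPath (fun k => W (min k τ.card)) τ.card ∧
      ∀ k < τ.card, stepCount (fun k => W (min k τ.card)) k = childCount τ (u k) := by
  have hcard : 0 < τ.card := Finset.card_pos.2 ⟨[], hτ.1⟩
  have hsum : ∀ k ≤ τ.card, W k = ∑ i ∈ Finset.range k, (childCount τ (u i) : ℤ) - k := by
    intro k hk
    induction k with
    | zero => simp [hW0]
    | succ k ih =>
      rw [hW k hk, ih (by omega), Finset.sum_range_succ]
      push_cast
      ring
  have hincr : ∀ k < τ.card,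
      W (min (k + 1) τ.card) - W (min k τ.card) = childCount τ (u k) - 1 := by
    intro k hk
    rw [min_eq_left hk, min_eq_left (by omega), hW k hk]
    ring
  refine ⟨⟨by simp [hW0], fun k hk => ?_, fun k hk => ?_, fun k hk => ?_⟩, fun k hk => ?_⟩
  · have : (k : ℤ) ≤ ((∑ i ∈ Finset.range k, childCount τ (u i) : ℕ) : ℤ) :=
      Nat.cast_le.2 (hu.le_sum_childCount hk)
    push_cast at this
    rw [min_eq_left hk.le, hsum k hk.le]
    linarith
  · have := hu.sum_childCount hτ
    simp only [min_eq_right hk, hsum τ.card le_rfl]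
    zify [hcard] at this
    push_cast [this]
    ring
  · rw [hincr k hk]
    omega
  · simp only [stepCount, hincr k hk, sub_add_cancel, Int.toNat_natCast]

/-- Equal to `0` for a path that never visits `-1`, since `sInf ∅ = 0`. -/
noncomputable def hitTime (q : ℕ → ℤ) : ℕ := sInf {k | q k = -1}

lemma Nat.sInf_eq_iff {s : Set ℕ} {n : ℕ} : sInf s = n ↔ IsLeast s n ∨ (n = 0 ∧ s = ∅) := by
  rcases s.eq_empty_or_nonempty with rfl | hs
  · simp [eq_comm, IsLeast]
  · refine ⟨fun h => Or.inl (h ▸ ⟨Nat.sInf_mem hs, fun k hk => Nat.sInf_le hk⟩), ?_⟩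
    rintro (h | ⟨-, rfl⟩)
    · exact h.csInf_eq
    · exact absurd hs Set.not_nonempty_empty

lemma measurable_hitTime : Measurable hitTime := by
  refine measurable_to_countable' fun n => ?_
  have : hitTime ⁻¹' {n} =
      {q | (q n = -1 ∧ ∀ k, q k = -1 → n ≤ k) ∨ (n = 0 ∧ ∀ k, q k ≠ -1)} := by
    ext q
    simp only [Set.mem_preimage, Set.mem_singleton_iff, hitTime, Nat.sInf_eq_iff, IsLeast,
      lowerBounds, Set.eq_empty_iff_forall_notMem]
    rfl
  rw [this]
  measurability

lemma hitTime_stopped (q : ℕ → ℤ) : hitTime (fun k => q (min k (hitTime q))) = hitTime q := by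
  rcases Nat.sInf_eq_iff.1 (rfl : hitTime q = hitTime q) with ⟨hmem, hmin⟩ | ⟨h0, hempty⟩
  · refine IsLeast.csInf_eq ⟨by simpa using hmem, fun k (hk : q (min k _) = -1) => ?_⟩
    rcases le_total k (hitTime q) with hkn | hnk
    · rw [min_eq_left hkn] at hk
      exact hmin hk
    · exact hnk
  · rw [h0]
    refine Nat.sInf_eq_iff.2 (Or.inr ⟨rfl, Set.eq_empty_of_forall_notMem fun k hk => ?_⟩)
    exact Set.eq_empty_iff_forall_notMem.1 hempty 0 (by simpa using hk)

section Probability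

variable {Ω : Type*} [MeasurableSpace Ω] {P : Measure Ω}

lemma ProbabilityTheory.IndepFun.measure_eq_eq_zero [IsFiniteMeasure P] {X Y : Ω → ℝ}
    (hX : Measurable X) (hY : Measurable Y) (hXY : IndepFun X Y P) (hatom : ∀ a, P.map Y {a} = 0) :
    P {ω | X ω = Y ω} = 0 := by
  have hdiag : MeasurableSet {q : ℝ × ℝ | q.1 = q.2} :=
    measurableSet_eq_fun measurable_fst measurable_snd
  have hmap := (indepFun_iff_map_prod_eq_prod_map_map hX.aemeasurable hY.aemeasurable).1 hXY
  change P ((fun ω => (X ω, Y ω)) ⁻¹' {q | q.1 = q.2}) = 0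
  rw [← Measure.map_apply (hX.prodMk hY) hdiag, hmap, Measure.prod_apply hdiag]
  simp [Set.preimage, hatom]

lemma ae_injective_of_iIndepFun [IsFiniteMeasure P] {ι : Type*} [Countable ι] {w : ι → Ω → ℝ}
    (hw : ∀ i, Measurable (w i)) (hindep : iIndepFun w P) (hatom : ∀ i a, P.map (w i) {a} = 0) :
    ∀ᵐ ω ∂P, Function.Injective fun i => w i ω := by
  simp only [Function.Injective, ae_all_iff]
  intro i j
  by_cases hij : i = j
  · exact ae_of_all _ fun _ _ => hij
  · filter_upwards [measure_eq_zero_iff_ae_notMem.1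
      ((hindep.indepFun hij).measure_eq_eq_zero (hw i) (hw j) (hatom j))] with ω hω h
    exact absurd h hω

lemma map_hitTime_eq_of_ae {Z : Ω → ℕ → ℤ} (hZ : Measurable Z) {N : Ω → ℕ}
    (h : ∀ᵐ ω ∂P, hitTime (Z ω) = N ω) : (P.map Z).map hitTime = P.map N := by
  rw [Measure.map_map measurable_hitTime hZ]
  exact Measure.map_congr h

end Probability

lemma MeasureTheory.Measure.eq_of_forall_singleton_le {α : Type*} [MeasurableSpace α]
    [MeasurableSingletonClass α] {m₁ m₂ : Measure α} [IsProbabilityMeasure m₁]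
    [IsProbabilityMeasure m₂] {C : Set α} (hC : C.Countable) (h₁ : m₁ Cᶜ = 0)
    (hle : ∀ p ∈ C, m₁ {p} ≤ m₂ {p}) : m₁ = m₂ := by
  refine Measure.eq_of_le_of_isProbabilityMeasure (Measure.le_iff'.2 fun A => ?_)
  have hAC : (A ∩ C).Countable := hC.mono Set.inter_subset_right
  have hsum (m : Measure α) : ∑' p : ↑(A ∩ C), m {↑p} = m (A ∩ C) := by
    simpa using tsum_measure_preimage_singleton (μ := m) hAC (f := id)
      fun _ _ => measurableSet_singleton _
  calc m₁ A = m₁ (A ∩ C) := (measure_inter_conull h₁).symm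
    _ = ∑' p : ↑(A ∩ C), m₁ {↑p} := (hsum m₁).symm
    _ ≤ ∑' p : ↑(A ∩ C), m₂ {↑p} := ENNReal.tsum_le_tsum fun p => hle p p.2.2
    _ = m₂ (A ∩ C) := hsum m₂
    _ ≤ m₂ A := measure_mono Set.inter_subset_left

section GaltonWatson

variable {Ω : Type*} [MeasurableSpace Ω] {P : Measure Ω} {T : Ω → Finset (List ℕ)}
  {ξ : Ω → List ℕ → ℝ} {μ : ℕ → ℝ}

lemma measure_tree_inter_primCountWeights
    (hTlaw : ∀ τ, IsPlaneTree τ → P {ω | T ω = τ} = ∏ v ∈ τ, ENNReal.ofReal (μ (childCount τ v)))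
    (hξT : IndepFun ξ T P) {τ : Finset (List ℕ)} (hτ : IsPlaneTree τ) (c : ℕ → ℕ) :
    P ({ω | T ω = τ} ∩ ξ ⁻¹' primCountWeights τ c)
      = (∏ k ∈ Finset.range τ.card, ENNReal.ofReal (μ (c k))) * P (ξ ⁻¹' primCountWeights τ c) := by
  have hind : P (ξ ⁻¹' primCountWeights τ c ∩ {ω | T ω = τ})
      = P (ξ ⁻¹' primCountWeights τ c) * P {ω | T ω = τ} :=
    hξT.measure_inter_preimage_eq_mul _ {τ} (measurableSet_primCountWeights τ c)
      MeasurableSpace.measurableSet_top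
  rw [Set.inter_comm, hind, mul_comm]
  rcases (primCountWeights τ c).eq_empty_or_nonempty with h | ⟨x, u, hu, hc⟩
  · simp [h]
  · rw [hTlaw τ hτ, ← hu.prod_comp]
    exact congrArg (· * _) (Finset.prod_congr rfl fun k hk => by rw [hc k (Finset.mem_range.1 hk)])

/-- By `eq_of_mem_primCountWeights`, the events summed over are almost surely disjoint. -/
lemma tsum_measure_primCountWeights_le_one [IsProbabilityMeasure P] (hξ : Measurable ξ)
    (hinj : ∀ᵐ ω ∂P, Function.Injective (ξ ω)) (c : ℕ → ℕ) (n : ℕ) :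
    ∑' τ : {τ : Finset (List ℕ) // IsPlaneTree τ ∧ τ.card = n},
      P (ξ ⁻¹' primCountWeights τ c) ≤ 1 := by
  refine (tsum_meas_le_meas_iUnion_of_disjoint₀ P
    (fun τ => (hξ (measurableSet_primCountWeights _ c)).nullMeasurableSet) ?_).trans prob_le_one
  have hnoninj : P {ω | ¬ Function.Injective (ξ ω)} = 0 := ae_iff.1 hinj
  intro τ τ' hne
  refine measure_mono_null (fun ω (hω : ω ∈ _ ∩ _) (hinjω : Function.Injective (ξ ω)) => hne ?_)
    hnoninj
  exact Subtype.ext (eq_of_mem_primCountWeights τ.2.1 τ'.2.1 (τ.2.2.trans τ'.2.2.symm) hinjω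
    hω.1 hω.2)

lemma measure_primPath_eq_le_prod [IsProbabilityMeasure P]
    (hTlaw : ∀ τ, IsPlaneTree τ → P {ω | T ω = τ} = ∏ v ∈ τ, ENNReal.ofReal (μ (childCount τ v)))
    (hξT : IndepFun ξ T P) (hξ : Measurable ξ) (hinj : ∀ᵐ ω ∂P, Function.Injective (ξ ω))
    (hTtree : ∀ᵐ ω ∂P, IsPlaneTree (T ω)) {prim : Ω → ℕ → List ℕ}
    (hprim : ∀ᵐ ω ∂P, IsPrimOrder (T ω) (ξ ω) (prim ω)) {W : Ω → ℕ → ℤ} (hW0 : ∀ ω, W ω 0 = 0)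
    (hWs : ∀ᵐ ω ∂P, ∀ k < (T ω).card, W ω (k + 1) = W ω k + childCount (T ω) (prim ω k) - 1)
    {p : ℕ → ℤ} {n : ℕ} (hp : IsLukasiewiczPath p n) :
    P {ω | (fun k => W ω (min k (T ω).card)) = p}
      ≤ ∏ k ∈ Finset.range n, ENNReal.ofReal (μ (stepCount p k)) := by
  let Trees := {τ : Finset (List ℕ) // IsPlaneTree τ ∧ τ.card = n}
  have hsub : {ω | (fun k => W ω (min k (T ω).card)) = p}
      ≤ᵐ[P] ⋃ τ : Trees, {ω | T ω = τ} ∩ ξ ⁻¹' primCountWeights τ (stepCount p) := by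
    filter_upwards [hTtree, hprim, hWs] with ω hτ hu hW (hω : _ = p)
    obtain ⟨hL, hstep⟩ := hu.isLukasiewiczPath hτ (hW0 ω) hW
    rw [hω] at hL hstep
    have hcard : (T ω).card = n := hL.length_eq hp
    exact Set.mem_iUnion.2 ⟨⟨T ω, hτ, hcard⟩, rfl, prim ω, hu, fun k hk => (hstep k hk).symm⟩
  calc P {ω | (fun k => W ω (min k (T ω).card)) = p}
      ≤ ∑' τ : Trees, P ({ω | T ω = τ} ∩ ξ ⁻¹' primCountWeights τ (stepCount p)) :=
        (measure_mono_ae hsub).trans (measure_iUnion_le _)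
    _ = (∏ k ∈ Finset.range n, ENNReal.ofReal (μ (stepCount p k)))
          * ∑' τ : Trees, P (ξ ⁻¹' primCountWeights τ (stepCount p)) := by
        rw [← ENNReal.tsum_mul_left]
        refine tsum_congr fun τ => ?_
        rw [measure_tree_inter_primCountWeights hTlaw hξT τ.2.1, τ.2.2]
    _ ≤ ∏ k ∈ Finset.range n, ENNReal.ofReal (μ (stepCount p k)) :=
        mul_le_of_le_one_right' (tsum_measure_primCountWeights_le_one hξ hinj _ n)

end GaltonWatson

lemma prod_le_measure_stoppedWalk_eq {Ω' : Type*} [MeasurableSpace Ω'] {P' : Measure Ω'} {μ : ℕ → ℝ}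
    {η : ℕ → Ω' → ℕ} (hηindep : iIndepFun η P')
    (hηlaw : ∀ k j, P' {ω' | η k ω' = j} = ENNReal.ofReal (μ j)) {X : Ω' → ℕ → ℤ}
    (hX : ∀ ω' k, X ω' k = ∑ i ∈ Finset.range k, ((η i ω' : ℤ) - 1)) {ζ : Ω' → ℕ}
    (hζ : ∀ ω', ζ ω' = sInf {k | X ω' k = -1}) {p : ℕ → ℤ} {n : ℕ} (hp : IsLukasiewiczPath p n) :
    ∏ k ∈ Finset.range n, ENNReal.ofReal (μ (stepCount p k))
      ≤ P' {ω' | (fun k => X ω' (min k (ζ ω'))) = p} := by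
  calc ∏ k ∈ Finset.range n, ENNReal.ofReal (μ (stepCount p k))
      = P' (⋂ i ∈ Finset.range n, η i ⁻¹' {stepCount p i}) := by
        rw [hηindep.measure_inter_preimage_eq_mul _ fun i _ => measurableSet_singleton _]
        exact Finset.prod_congr rfl fun i _ => (hηlaw i _).symm
    _ ≤ P' {ω' | (fun k => X ω' (min k (ζ ω'))) = p} := by
        refine measure_mono fun ω' hω' => ?_
        simp only [Set.mem_iInter, Finset.mem_range, Set.mem_preimage,
          Set.mem_singleton_iff] at hω'
        change (fun k => X ω' (min k (ζ ω'))) = p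
        rw [hζ ω']
        exact hp.stopped_walk_eq (hX ω') hω'

theorem stmt_6_general
    {Ω : Type*} [MeasurableSpace Ω] (P : Measure Ω) [IsProbabilityMeasure P]
    {Ω' : Type*} [MeasurableSpace Ω'] (P' : Measure Ω') [IsProbabilityMeasure P']
    (μ : ℕ → ℝ)
    -- the Galton–Watson tree
    (T : Ω → Finset (List ℕ))
    (hTtree : ∀ᵐ ω ∂P, IsPlaneTree (T ω))
    (hTlaw : ∀ τ : Finset (List ℕ), IsPlaneTree τ →
      P {ω | T ω = τ} = ∏ v ∈ τ, ENNReal.ofReal (μ (childCount τ v)))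
    -- i.i.d. positive weights with diffuse law, independent of the tree
    (w : List ℕ → Ω → ℝ) (hwmeas : ∀ v, Measurable (w v))
    (ν : Measure ℝ)
    (hwlaw : ∀ v, Measure.map (w v) P = ν)
    (hwindep : iIndepFun w P)
    (hνdiffuse : ∀ x : ℝ, ν {x} = 0)
    (hwT : IndepFun (fun ω => fun v => w v ω) T P)
    -- the Prim order and the Prim path of the tree
    (prim : Ω → ℕ → List ℕ)
    (hprim : ∀ᵐ ω ∂P, IsPrimOrder (T ω) (fun v => w v ω) (prim ω))
    (Wp : Ω → ℕ → ℤ) (hWp0 : ∀ ω, Wp ω 0 = 0)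
    (hWps : ∀ᵐ ω ∂P, ∀ k < (T ω).card,
      Wp ω (k + 1) = Wp ω k + childCount (T ω) (prim ω k) - 1)
    (hWpmeas : Measurable fun ω => fun k => Wp ω (min k (T ω).card))
    -- the random walk with step law `μ̂(k) = μ(k+1)`
    (η : ℕ → Ω' → ℕ)
    (hηindep : iIndepFun η P')
    (hηlaw : ∀ k j, P' {ω' | η k ω' = j} = ENNReal.ofReal (μ j))
    (X : Ω' → ℕ → ℤ)
    (hX : ∀ ω' k, X ω' k = ∑ i ∈ Finset.range k, ((η i ω' : ℤ) - 1))
    (ζ₁ : Ω' → ℕ) (hζ₁ : ∀ ω', ζ₁ ω' = sInf {k | X ω' k = -1})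
    (hXmeas : Measurable fun ω' => fun k => X ω' (min k (ζ₁ ω'))) :
    Measure.map (fun ω => fun k => Wp ω (min k (T ω).card)) P
      = Measure.map (fun ω' => fun k => X ω' (min k (ζ₁ ω'))) P'
    ∧ Measure.map (fun ω => (T ω).card) P = Measure.map ζ₁ P' := by
  have hξ : Measurable fun ω v => w v ω := measurable_pi_lambda _ hwmeas
  have hinj : ∀ᵐ ω ∂P, Function.Injective fun v => w v ω :=
    ae_injective_of_iIndepFun hwmeas hwindep fun v a => by rw [hwlaw, hνdiffuse]
  have hLuk : ∀ᵐ ω ∂P, IsLukasiewiczPath (fun k => Wp ω (min k (T ω).card)) (T ω).card := by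
    filter_upwards [hTtree, hprim, hWps] with ω hτ hu hW
    exact (hu.isLukasiewiczPath hτ (hWp0 ω) hW).1
  have := Measure.isProbabilityMeasure_map (μ := P) hWpmeas.aemeasurable
  have := Measure.isProbabilityMeasure_map (μ := P') hXmeas.aemeasurable
  have hpath : Measure.map (fun ω => fun k => Wp ω (min k (T ω).card)) P
      = Measure.map (fun ω' => fun k => X ω' (min k (ζ₁ ω'))) P' := by
    refine Measure.eq_of_forall_singleton_le countable_setOf_isLukasiewiczPath ?_ ?_
    · rw [Measure.map_apply hWpmeas countable_setOf_isLukasiewiczPath.measurableSet.compl]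
      exact measure_eq_zero_iff_ae_notMem.2 (hLuk.mono fun ω h hC => hC ⟨_, h⟩)
    · rintro p ⟨n, hp⟩
      rw [Measure.map_apply hWpmeas (measurableSet_singleton p),
        Measure.map_apply hXmeas (measurableSet_singleton p)]
      exact (measure_primPath_eq_le_prod hTlaw hwT hξ hinj hTtree hprim hWp0 hWps hp).trans
        (prod_le_measure_stoppedWalk_eq hηindep hηlaw hX hζ₁ hp)
  refine ⟨hpath, ?_⟩
  calc Measure.map (fun ω => (T ω).card) P
      = (Measure.map (fun ω => fun k => Wp ω (min k (T ω).card)) P).map hitTime :=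
        (map_hitTime_eq_of_ae hWpmeas (hLuk.mono fun ω h => h.sInf_eq)).symm
    _ = Measure.map ζ₁ P' := by
        rw [hpath]
        exact map_hitTime_eq_of_ae hXmeas
          (ae_of_all _ fun ω' => by rw [hζ₁]; exact hitTime_stopped (X ω'))

/-- Let `T` be a critical Galton–Watson tree with offspring distribution
`μ` (critical, `μ(0)>0`, `μ(0)+μ(1)<1`), its edges carrying i.i.d. positive, a.s.
distinct weights independent of the tree, and let `Wp` be the Prim path of `T`.  Then
`Wp`, stopped at `ζ(T)` (where it equals `-1`), has the same law as the random walk `X`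
with steps distributed as `μ̂(k) = μ(k+1)` on `{-1,0,1,…}` stopped when first hitting
`-1`; in particular the total progeny `ζ(T)` has the same law as
`ζ₁ = inf{k : X k = -1}`. -/
theorem stmt_6
    {Ω : Type*} [MeasurableSpace Ω] (P : Measure Ω) [IsProbabilityMeasure P]
    {Ω' : Type*} [MeasurableSpace Ω'] (P' : Measure Ω') [IsProbabilityMeasure P']
    (μ : ℕ → ℝ) (hμnn : ∀ k, 0 ≤ μ k) (hμsum : ∑' k, μ k = 1)
    (hμmean : ∑' k : ℕ, (k : ℝ) * μ k = 1) (hμ0 : 0 < μ 0) (hμ01 : μ 0 + μ 1 < 1)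
    -- the Galton–Watson tree
    (T : Ω → Finset (List ℕ)) (hTmeas : Measurable T)
    (hTtree : ∀ᵐ ω ∂P, IsPlaneTree (T ω))
    (hTlaw : ∀ τ : Finset (List ℕ), IsPlaneTree τ →
      P {ω | T ω = τ} = ∏ v ∈ τ, ENNReal.ofReal (μ (childCount τ v)))
    -- i.i.d. positive weights with diffuse law, independent of the tree
    (w : List ℕ → Ω → ℝ) (hwmeas : ∀ v, Measurable (w v))
    (ν : Measure ℝ) (hν : IsProbabilityMeasure ν)
    (hwlaw : ∀ v, Measure.map (w v) P = ν)
    (hwindep : iIndepFun w P)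
    (hνpos : ν (Iic 0) = 0) (hνdiffuse : ∀ x : ℝ, ν {x} = 0)
    (hwT : IndepFun (fun ω => fun v => w v ω) T P)
    -- the Prim order and the Prim path of the tree
    (prim : Ω → ℕ → List ℕ)
    (hprim : ∀ᵐ ω ∂P, IsPrimOrder (T ω) (fun v => w v ω) (prim ω))
    (Wp : Ω → ℕ → ℤ) (hWp0 : ∀ ω, Wp ω 0 = 0)
    (hWps : ∀ᵐ ω ∂P, ∀ k < (T ω).card,
      Wp ω (k + 1) = Wp ω k + childCount (T ω) (prim ω k) - 1)
    (hWpmeas : Measurable fun ω => fun k => Wp ω (min k (T ω).card))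
    -- the random walk with step law `μ̂(k) = μ(k+1)`
    (η : ℕ → Ω' → ℕ) (hηmeas : ∀ k, Measurable (η k))
    (hηindep : iIndepFun η P')
    (hηlaw : ∀ k j, P' {ω' | η k ω' = j} = ENNReal.ofReal (μ j))
    (X : Ω' → ℕ → ℤ)
    (hX : ∀ ω' k, X ω' k = ∑ i ∈ Finset.range k, ((η i ω' : ℤ) - 1))
    (ζ₁ : Ω' → ℕ) (hζ₁ : ∀ ω', ζ₁ ω' = sInf {k | X ω' k = -1})
    (hXmeas : Measurable fun ω' => fun k => X ω' (min k (ζ₁ ω'))) :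
    Measure.map (fun ω => fun k => Wp ω (min k (T ω).card)) P
      = Measure.map (fun ω' => fun k => X ω' (min k (ζ₁ ω'))) P'
    ∧ Measure.map (fun ω => (T ω).card) P = Measure.map ζ₁ P' :=
  stmt_6_general P P' μ T hTtree hTlaw w hwmeas ν hwlaw hwindep hνdiffuse hwT prim hprim Wp hWp0
    hWps hWpmeas η hηindep hηlaw X hX ζ₁ hζ₁ hXmeas
end

section
/- For each n ∈ ℕ ∪ {∞}, let Π⁽ⁿ⁾ be an exchangeable random partition of ℕ with asymptotic ranked frequencies (|Π⁽ⁿ⁾(i)|^↓)_{i≥1} ∈ S_{≤1}. Suppose (|Π⁽ⁿ⁾(i)|^↓)_{i≥1} converges in distribution to (|Π⁽^∞⁾(i)|^↓)_{i≥1} in the topology of pointwise convergence on S_{≤1}, and that Σ_i |Π⁽^∞⁾(i)|^↓ = 1 almost surely. Then the convergence in distribution holds in the ℓ¹ metric on S₁. -/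
open MeasureTheory Filter Topology

noncomputable def truncF (N : ℕ) (x : ℕ → ℝ) : ℕ → ℝ := fun i => if i < N then x i else 0

noncomputable def GNf (N : ℕ) (x : ℕ → ℝ) : ℝ := min (∑ i ∈ Finset.range N, max (x i) 0) 1

lemma GNf_cont (N : ℕ) : Continuous (GNf N) :=
  (continuous_finset_sum _ fun i _ => (continuous_apply i).max continuous_const).min
    continuous_const

lemma GNf_nonneg (N : ℕ) (x : ℕ → ℝ) : 0 ≤ GNf N x :=
  le_min (Finset.sum_nonneg fun i _ => le_max_right _ _) one_pos.le

lemma GNf_le_one (N : ℕ) (x : ℕ → ℝ) : GNf N x ≤ 1 := min_le_right _ _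

lemma GNf_abs_le (N : ℕ) (x : ℕ → ℝ) : |GNf N x| ≤ 1 :=
  abs_le.2 ⟨by linarith [GNf_nonneg N x], GNf_le_one N x⟩

lemma tail_summable (N : ℕ) {x : ℕ → ℝ} (hnn : ∀ i, 0 ≤ x i) (hs : Summable x) :
    Summable (fun i => |x i - truncF N x i|) := by
  have : ∀ i, |x i - truncF N x i| = if i < N then 0 else x i := by
    intro i
    simp only [truncF]
    split <;> simp [abs_of_nonneg (hnn i)]
  simp only [this]
  apply hs.of_nonneg_of_le (fun i => by split <;> simp [hnn i])
  intro i; split <;> simp [hnn i]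

lemma tail_eq (N : ℕ) {x : ℕ → ℝ} (hnn : ∀ i, 0 ≤ x i) (hs : Summable x) :
    ∑' i, |x i - truncF N x i| = ∑' i, x i - ∑ i ∈ Finset.range N, x i := by
  have h1 : ∀ i, |x i - truncF N x i| = if i < N then 0 else x i := by
    intro i
    simp only [truncF]
    split <;> simp [abs_of_nonneg (hnn i)]
  have h2 : ∀ i, x i = (if i < N then x i else 0) + (if i < N then 0 else x i) := by
    intro i; split <;> ring
  have hsum1 : Summable (fun i => if i < N then x i else (0:ℝ)) := by
    apply summable_of_ne_finset_zero (s := Finset.range N)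
    intro i hi
    simp only [Finset.mem_range, not_lt] at hi
    exact if_neg (by omega)
  have hsum2 : Summable (fun i => if i < N then (0:ℝ) else x i) := by
    have := tail_summable N hnn hs
    simpa only [h1] using this
  have key : ∑' i, x i = (∑ i ∈ Finset.range N, x i) + ∑' i, (if i < N then (0:ℝ) else x i) := by
    conv_lhs => rw [tsum_congr h2]
    rw [Summable.tsum_add hsum1 hsum2]
    congr 1
    rw [tsum_eq_sum (s := Finset.range N)]
    · exact Finset.sum_congr rfl fun i hi => if_pos (Finset.mem_range.1 hi)
    · intro i hi
      simp only [Finset.mem_range, not_lt] at hi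
      exact if_neg (by omega)
  simp only [h1]
  linarith [key]

lemma tail_le (N : ℕ) {x : ℕ → ℝ} (hnn : ∀ i, 0 ≤ x i) (hs : Summable x)
    (hle : ∑' i, x i ≤ 1) :
    ∑' i, |x i - truncF N x i| ≤ 1 - GNf N x := by
  rw [tail_eq N hnn hs]
  have hG : GNf N x ≤ ∑ i ∈ Finset.range N, x i := by
    refine (min_le_left _ _).trans_eq ?_
    exact Finset.sum_congr rfl fun i _ => max_eq_left (hnn i)
  linarith


-- ℓ¹-uniformly continuous F composed with truncation is continuous for product topology
lemma cont_F_trunc (F : (ℕ → ℝ) → ℝ)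
    (hF : ∀ ε > 0, ∃ δ > 0, ∀ x y : ℕ → ℝ, Summable (fun i => |x i - y i|) →
        ∑' i, |x i - y i| < δ → |F x - F y| < ε) (N : ℕ) :
    Continuous (fun x => F (truncF N x)) := by
  apply SeqContinuous.continuous
  intro u a hu
  rw [Metric.tendsto_atTop]
  intro ε hε
  obtain ⟨δ, hδ, hδF⟩ := hF ε hε
  have hcoord : ∀ i, Tendsto (fun k => u k i) atTop (𝓝 (a i)) := by
    intro i
    exact (tendsto_pi_nhds.1 hu) i
  have hev : ∀ᶠ k in atTop, ∀ i ∈ Finset.range N, |u k i - a i| < δ / (N + 1) := by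
    rw [eventually_all_finset]
    intro i _
    have := (hcoord i).sub_const (a i)
    have h2 : Tendsto (fun k => |u k i - a i|) atTop (𝓝 |a i - a i|) := (this.abs)
    rw [sub_self, abs_zero] at h2
    exact h2.eventually_lt_const (by positivity)
  rw [eventually_atTop] at hev
  obtain ⟨K, hK⟩ := hev
  refine ⟨K, fun k hk => ?_⟩
  rw [Real.dist_eq]
  have hzero : ∀ i ∉ Finset.range N, |truncF N (u k) i - truncF N a i| = 0 := by
    intro i hi
    simp only [Finset.mem_range, not_lt] at hi
    simp [truncF, if_neg (by omega : ¬ i < N)]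
  have hsum : Summable (fun i => |truncF N (u k) i - truncF N a i|) :=
    summable_of_ne_finset_zero (s := Finset.range N) hzero
  apply hδF _ _ hsum
  rw [tsum_eq_sum hzero]
  have hb : ∀ i ∈ Finset.range N, |truncF N (u k) i - truncF N a i| ≤ δ / (N + 1) := by
    intro i hi
    have hiN := Finset.mem_range.1 hi
    simp only [truncF, if_pos hiN]
    exact (hK k hk i hi).le
  calc ∑ i ∈ Finset.range N, |truncF N (u k) i - truncF N a i|
      ≤ ∑ i ∈ Finset.range N, δ / (N + 1) := Finset.sum_le_sum hb
    _ = N * (δ / (N + 1)) := by rw [Finset.sum_const, Finset.card_range]; ring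
    _ < δ := by
        rw [mul_div_assoc']
        rw [div_lt_iff₀ (by positivity)]
        nlinarith

lemma tendsto_F_trunc (F : (ℕ → ℝ) → ℝ)
    (hF : ∀ ε > 0, ∃ δ > 0, ∀ x y : ℕ → ℝ, Summable (fun i => |x i - y i|) →
        ∑' i, |x i - y i| < δ → |F x - F y| < ε)
    {x : ℕ → ℝ} (hnn : ∀ i, 0 ≤ x i) (hs : Summable x) :
    Tendsto (fun N => F (truncF N x)) atTop (𝓝 (F x)) := by
  rw [Metric.tendsto_atTop]
  intro ε hε
  obtain ⟨δ, hδ, hδF⟩ := hF ε hε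
  have htail : Tendsto (fun N => ∑' i, x i - ∑ i ∈ Finset.range N, x i) atTop (𝓝 0) := by
    have := hs.hasSum.tendsto_sum_nat
    have h2 := (tendsto_const_nhds (x := ∑' i, x i) (f := atTop)).sub this
    simpa using h2
  have hev : ∀ᶠ N in atTop, ∑' i, x i - ∑ i ∈ Finset.range N, x i < δ := by
    have := htail.eventually_lt_const hδ
    simpa using this
  rw [eventually_atTop] at hev
  obtain ⟨K, hK⟩ := hev
  refine ⟨K, fun N hN => ?_⟩
  rw [Real.dist_eq, abs_sub_comm]
  apply hδF x (truncF N x) (tail_summable N hnn hs)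
  rw [tail_eq N hnn hs]
  exact hK N hN

lemma ptwise_bound (F : (ℕ → ℝ) → ℝ) (C : ℝ) (hC : ∀ x, |F x| ≤ C)
    (ε' δ : ℝ) (hε' : 0 < ε') (hδ : 0 < δ)
    (hδF : ∀ x y : ℕ → ℝ, Summable (fun i => |x i - y i|) →
        ∑' i, |x i - y i| < δ → |F x - F y| < ε')
    {x : ℕ → ℝ} (hnn : ∀ i, 0 ≤ x i) (hs : Summable x) (hle : ∑' i, x i ≤ 1) (N : ℕ) :
    |F x - F (truncF N x)| ≤ ε' + (2 * C / δ) * (1 - GNf N x) := by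
  have hC0 : 0 ≤ C := le_trans (abs_nonneg _) (hC 0)
  have hG1 := GNf_le_one N x
  have hfrac : 0 ≤ 2 * C / δ := by positivity
  by_cases h : ∑' i, |x i - truncF N x i| < δ
  · have h1 := hδF x _ (tail_summable N hnn hs) h
    nlinarith
  · push_neg at h
    have htail := tail_le N hnn hs hle
    have h2 : |F x - F (truncF N x)| ≤ 2 * C := by
      calc |F x - F (truncF N x)| ≤ |F x| + |F (truncF N x)| := abs_sub _ _
        _ ≤ 2 * C := by linarith [hC x, hC (truncF N x)]
    have h3 : 2 * C = (2 * C / δ) * δ := by field_simp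
    have h4 : (2 * C / δ) * δ ≤ (2 * C / δ) * (1 - GNf N x) := by
      apply mul_le_mul_of_nonneg_left (by linarith) hfrac
    linarith

lemma aemeas_F_comp {Ωt : Type*} [MeasurableSpace Ωt] (μ : Measure Ωt)
    (F : (ℕ → ℝ) → ℝ)
    (hFuc : ∀ ε > 0, ∃ δ > 0, ∀ x y : ℕ → ℝ, Summable (fun i => |x i - y i|) →
        ∑' i, |x i - y i| < δ → |F x - F y| < ε)
    (Y : Ωt → ℕ → ℝ) (hY : Measurable Y)
    (hgood : ∀ᵐ ω ∂μ, (∀ i, 0 ≤ Y ω i) ∧ Summable (Y ω)) :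
    AEMeasurable (fun ω => F (Y ω)) μ := by
  apply aemeasurable_of_tendsto_metrizable_ae' (f := fun N ω => F (truncF N (Y ω)))
  · intro N
    exact (((cont_F_trunc F hFuc N).measurable).comp hY).aemeasurable
  · filter_upwards [hgood] with ω hω
    exact tendsto_F_trunc F hFuc hω.1 hω.2

lemma key_bound {Ωt : Type*} [MeasurableSpace Ωt] (μ : Measure Ωt) [IsProbabilityMeasure μ]
    (F : (ℕ → ℝ) → ℝ) (C : ℝ) (hC : ∀ x, |F x| ≤ C)
    (hFuc : ∀ ε > 0, ∃ δ > 0, ∀ x y : ℕ → ℝ, Summable (fun i => |x i - y i|) →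
        ∑' i, |x i - y i| < δ → |F x - F y| < ε)
    (ε' δ : ℝ) (hε' : 0 < ε') (hδ : 0 < δ)
    (hδF : ∀ x y : ℕ → ℝ, Summable (fun i => |x i - y i|) →
        ∑' i, |x i - y i| < δ → |F x - F y| < ε')
    (Y : Ωt → ℕ → ℝ) (hY : Measurable Y)
    (hgood : ∀ᵐ ω ∂μ, (∀ i, 0 ≤ Y ω i) ∧ Summable (Y ω) ∧ ∑' i, Y ω i ≤ 1) (N : ℕ) :
    |∫ ω, F (Y ω) ∂μ - ∫ ω, F (truncF N (Y ω)) ∂μ| ≤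
      ε' + (2 * C / δ) * (1 - ∫ ω, GNf N (Y ω) ∂μ) := by
  have hgood' : ∀ᵐ ω ∂μ, (∀ i, 0 ≤ Y ω i) ∧ Summable (Y ω) := by
    filter_upwards [hgood] with ω hω using ⟨hω.1, hω.2.1⟩
  have hmeasF : AEMeasurable (fun ω => F (Y ω)) μ := aemeas_F_comp μ F hFuc Y hY hgood'
  have intF : Integrable (fun ω => F (Y ω)) μ := by
    apply Integrable.mono' (integrable_const C) hmeasF.aestronglyMeasurable
    filter_upwards with ω using by simpa using hC (Y ω)
  have intFt : Integrable (fun ω => F (truncF N (Y ω))) μ := by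
    apply Integrable.mono' (integrable_const C)
      ((((cont_F_trunc F hFuc N).measurable).comp hY).aestronglyMeasurable)
    filter_upwards with ω using by simpa using hC (truncF N (Y ω))
  have intG : Integrable (fun ω => GNf N (Y ω)) μ := by
    apply Integrable.mono' (integrable_const 1)
      (((GNf_cont N).measurable).comp hY).aestronglyMeasurable
    filter_upwards with ω using by simpa using GNf_abs_le N (Y ω)
  rw [← integral_sub intF intFt]
  have h1 : |∫ ω, (F (Y ω) - F (truncF N (Y ω))) ∂μ| ≤
      ∫ ω, |F (Y ω) - F (truncF N (Y ω))| ∂μ := by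
    simpa [Real.norm_eq_abs] using
      norm_integral_le_integral_norm (fun ω => F (Y ω) - F (truncF N (Y ω))) (μ := μ)
  refine h1.trans ?_
  have intRHS : Integrable (fun ω => ε' + (2 * C / δ) * (1 - GNf N (Y ω))) μ :=
    (integrable_const ε').add (((integrable_const 1).sub intG).const_mul _)
  have h2 : ∫ ω, |F (Y ω) - F (truncF N (Y ω))| ∂μ ≤
      ∫ ω, (ε' + (2 * C / δ) * (1 - GNf N (Y ω))) ∂μ := by
    apply integral_mono_ae (intF.sub intFt).abs intRHS
    filter_upwards [hgood] with ω hω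
    exact ptwise_bound F C hC ε' δ hε' hδ hδF hω.1 hω.2.1 hω.2.2 N
  refine h2.trans_eq ?_
  have i2 : Integrable (fun ω => (2 * C / δ) * (1 - GNf N (Y ω))) μ :=
    ((integrable_const 1).sub intG).const_mul _
  calc ∫ ω, (ε' + (2 * C / δ) * (1 - GNf N (Y ω))) ∂μ
      = (∫ _ω, ε' ∂μ) + ∫ ω, (2 * C / δ) * (1 - GNf N (Y ω)) ∂μ :=
        integral_add (integrable_const ε') i2
    _ = ε' + (2 * C / δ) * ∫ ω, (1 - GNf N (Y ω)) ∂μ := by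
        rw [integral_const, integral_const_mul]; simp
    _ = ε' + (2 * C / δ) * (1 - ∫ ω, GNf N (Y ω) ∂μ) := by
        rw [integral_sub (integrable_const 1) intG, integral_const]; simp

/-- Let `X n` be the asymptotic ranked frequencies of exchangeable random
partitions (so a.s. nonincreasing, nonnegative, with sum at most 1, i.e. elements of
`S_{≤1}`).  If `X n` converges in distribution to `X∞` for the topology of pointwise
convergence (tested against bounded continuous functionals), and the limit frequencies
a.s. sum to `1`, then the convergence in distribution holds for the `ℓ¹` metric on `S₁`
(tested against bounded, `ℓ¹`-uniformly continuous functionals). -/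
theorem stmt_7
    (Ω : ℕ → Type*) (mΩ : ∀ n, MeasurableSpace (Ω n)) (P : ∀ n, Measure (Ω n))
    (hP : ∀ n, IsProbabilityMeasure (P n))
    (Ωlim : Type*) [MeasurableSpace Ωlim] (Plim : Measure Ωlim) [IsProbabilityMeasure Plim]
    (X : ∀ n, Ω n → ℕ → ℝ) (Xlim : Ωlim → ℕ → ℝ)
    (hXmeas : ∀ n, Measurable (X n)) (hXlimmeas : Measurable Xlim)
    (hX : ∀ n, ∀ᵐ ω ∂P n,
      (∀ i j, i ≤ j → X n ω j ≤ X n ω i) ∧ (∀ i, 0 ≤ X n ω i) ∧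
        Summable (X n ω) ∧ ∑' i, X n ω i ≤ 1)
    (hXlim : ∀ᵐ ω ∂Plim,
      (∀ i j, i ≤ j → Xlim ω j ≤ Xlim ω i) ∧ (∀ i, 0 ≤ Xlim ω i) ∧
        Summable (Xlim ω) ∧ ∑' i, Xlim ω i ≤ 1)
    (hone : ∀ᵐ ω ∂Plim, ∑' i, Xlim ω i = 1)
    (hconv : ∀ F : (ℕ → ℝ) → ℝ, Continuous F → (∃ C, ∀ x, |F x| ≤ C) →
      Tendsto (fun n => ∫ ω, F (X n ω) ∂P n) atTop (𝓝 (∫ ω, F (Xlim ω) ∂Plim))) :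
    ∀ F : (ℕ → ℝ) → ℝ, (∃ C, ∀ x, |F x| ≤ C) →
      (∀ ε > 0, ∃ δ > 0, ∀ x y : ℕ → ℝ, Summable (fun i => |x i - y i|) →
        ∑' i, |x i - y i| < δ → |F x - F y| < ε) →
      Tendsto (fun n => ∫ ω, F (X n ω) ∂P n) atTop (𝓝 (∫ ω, F (Xlim ω) ∂Plim)) := by
  intro F hFbd hFuc
  obtain ⟨C, hC⟩ := hFbd
  have hC0 : 0 ≤ C := le_trans (abs_nonneg _) (hC 0)
  have hXg : ∀ n, ∀ᵐ ω ∂P n,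
      (∀ i, 0 ≤ X n ω i) ∧ Summable (X n ω) ∧ ∑' i, X n ω i ≤ 1 :=
    fun n => (hX n).mono fun ω h => ⟨h.2.1, h.2.2.1, h.2.2.2⟩
  have hXlimg : ∀ᵐ ω ∂Plim,
      (∀ i, 0 ≤ Xlim ω i) ∧ Summable (Xlim ω) ∧ ∑' i, Xlim ω i ≤ 1 :=
    hXlim.mono fun ω h => ⟨h.2.1, h.2.2.1, h.2.2.2⟩
  rw [Metric.tendsto_nhds]
  intro ε hε
  set ε' := ε / 8 with hε'def
  have hε' : 0 < ε' := by positivity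
  obtain ⟨δ, hδ, hδF⟩ := hFuc ε' hε'
  set η := ε' * δ / (2 * C + 1) with hηdef
  have hη : 0 < η := by positivity
  have hηkey : (2 * C / δ) * (2 * η) ≤ 2 * ε' := by
    have h1 : (2 * C / δ) * (2 * η) = 4 * C * ε' / (2 * C + 1) := by
      rw [hηdef]; field_simp; ring
    rw [h1, div_le_iff₀ (by positivity)]
    nlinarith
  -- dominated convergence: ∫ GNf N (Xlim) → 1
  have hGtendsto : Tendsto (fun N => ∫ ω, GNf N (Xlim ω) ∂Plim) atTop (𝓝 1) := by
    have h1 : (1 : ℝ) = ∫ _ω, (1 : ℝ) ∂Plim := by simp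
    rw [h1]
    apply tendsto_integral_of_dominated_convergence (bound := fun _ => 1)
    · intro N
      exact (((GNf_cont N).measurable).comp hXlimmeas).aestronglyMeasurable
    · exact integrable_const 1
    · intro N
      filter_upwards with ω
      simpa [Real.norm_eq_abs] using GNf_abs_le N (Xlim ω)
    · filter_upwards [hXlimg, hone] with ω hω h1ω
      have heq : ∀ N, GNf N (Xlim ω) = min (∑ i ∈ Finset.range N, Xlim ω i) 1 := by
        intro N
        unfold GNf
        congr 1
        exact Finset.sum_congr rfl fun i _ => max_eq_left (hω.1 i)
      simp only [heq]
      have hps := hω.2.1.hasSum.tendsto_sum_nat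
      rw [h1ω] at hps
      have hmin := hps.min (tendsto_const_nhds (x := (1 : ℝ)))
      simpa using hmin
  -- pick N
  have hNev : ∀ᶠ N in atTop, 1 - ∫ ω, GNf N (Xlim ω) ∂Plim < η := by
    have h2 := (tendsto_const_nhds (x := (1:ℝ)) (f := atTop)).sub hGtendsto
    rw [sub_self] at h2
    exact h2.eventually_lt_const hη
  obtain ⟨N, hN⟩ := hNev.exists
  -- term D
  have termD : |∫ ω, F (Xlim ω) ∂Plim - ∫ ω, F (truncF N (Xlim ω)) ∂Plim| ≤ 2 * ε' := by
    have := key_bound Plim F C hC hFuc ε' δ hε' hδ hδF Xlim hXlimmeas hXlimg N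
    have hfrac : 0 ≤ 2 * C / δ := by positivity
    nlinarith
  -- eventual bounds in n
  have hGn := hconv (GNf N) (GNf_cont N) ⟨1, GNf_abs_le N⟩
  have ev1 : ∀ᶠ n in atTop,
      1 - ∫ ω, GNf N (X n ω) ∂P n < 2 * η := by
    have := hGn.eventually (eventually_abs_sub_lt (∫ ω, GNf N (Xlim ω) ∂Plim) hη)
    filter_upwards [this] with n hn
    rw [abs_sub_lt_iff] at hn
    linarith [hn.2]
  have hFn := hconv (fun x => F (truncF N x)) (cont_F_trunc F hFuc N) ⟨C, fun x => hC _⟩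
  have ev2 : ∀ᶠ n in atTop,
      |(∫ ω, F (truncF N (X n ω)) ∂P n) - ∫ ω, F (truncF N (Xlim ω)) ∂Plim| < ε' := by
    have := hFn.eventually (eventually_abs_sub_lt (∫ ω, F (truncF N (Xlim ω)) ∂Plim) hε')
    exact this
  filter_upwards [ev1, ev2] with n h1 h2
  rw [Real.dist_eq]
  have termA : |∫ ω, F (X n ω) ∂P n - ∫ ω, F (truncF N (X n ω)) ∂P n| ≤ ε' + 2 * ε' := by
    have hkb := key_bound (P n) F C hC hFuc ε' δ hε' hδ hδF (X n) (hXmeas n) (hXg n) N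
    have hfrac : 0 ≤ 2 * C / δ := by positivity
    have : (2 * C / δ) * (1 - ∫ ω, GNf N (X n ω) ∂P n) ≤ (2 * C / δ) * (2 * η) :=
      mul_le_mul_of_nonneg_left h1.le hfrac
    linarith
  have tri : |∫ ω, F (X n ω) ∂P n - ∫ ω, F (Xlim ω) ∂Plim| ≤
      |∫ ω, F (X n ω) ∂P n - ∫ ω, F (truncF N (X n ω)) ∂P n| +
      |(∫ ω, F (truncF N (X n ω)) ∂P n) - ∫ ω, F (truncF N (Xlim ω)) ∂Plim| +
      |(∫ ω, F (truncF N (Xlim ω)) ∂Plim) - ∫ ω, F (Xlim ω) ∂Plim| := by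
    have := abs_sub_le (∫ ω, F (X n ω) ∂P n) (∫ ω, F (truncF N (X n ω)) ∂P n)
      (∫ ω, F (Xlim ω) ∂Plim)
    have h4 := abs_sub_le (∫ ω, F (truncF N (X n ω)) ∂P n)
      (∫ ω, F (truncF N (Xlim ω)) ∂Plim) (∫ ω, F (Xlim ω) ∂Plim)
    linarith
  rw [abs_sub_comm] at termD
  have : |∫ ω, F (X n ω) ∂P n - ∫ ω, F (Xlim ω) ∂Plim| < 3 * ε' + ε' + 2 * ε' := by
    linarith
  linarith [this, hε']
end

section
/- Let Π be an exchangeable random partition of ℕ with asymptotic ranked frequencies (|Π(i)|^↓)_{i≥1}. If almost surely the singleton {1} is not a block of Π, then Σ_{i≥1} |Π(i)|^↓ = 1 almost surely. -/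
/-!
Fix `m` and draw `t₀, t₁, …, t_m` uniformly from `{0, …, n-1}`. Grouping the tuples by the block
of `t₀`, the proportion of tuples in which `t₀` shares its block with one of `t₁, …, t_m` equals
`∑ᵢ hitProb m (xᵢ)` with `hitProb m x = x (1 - (1 - x)^m)`, evaluated at the empirical ranked
frequencies `xᵢ`; as `n → ∞` it tends to `∑ᵢ hitProb m (f i)`. Its expectation is an average over
tuples: by exchangeability every injective tuple contributes `P(0 ∼ j for some 1 ≤ j ≤ m)`, and
the non-injective ones are negligible. Hence `E[∑ᵢ hitProb m (f i)] = P(0 ∼ j for some 1 ≤ j ≤ m)`.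
Letting `m → ∞`, `E[∑ᵢ f i] = P({0} is not a block) = 1`, and since `∑ᵢ f i ≤ 1` this forces
`∑ᵢ f i = 1` almost surely.
-/

open MeasureTheory Filter Topology

/-- The `i`-th largest block size of the partition (equivalence relation) `R` restricted
to `{0,…,k-1}`. -/
noncomputable def rankedSize (R : ℕ → ℕ → Bool) (k i : ℕ) : ℕ :=
  ((((Finset.univ : Finset (Fin k)).image
      (fun j : Fin k => Finset.univ.filter fun i' : Fin k => R i' j)).val.map
        Finset.card).sort (· ≥ ·)).getD i 0

open Finset

namespace ExchangeablePartition

section Blocks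

variable (R : ℕ → ℕ → Bool)

def blockOf (n : ℕ) (j : Fin n) : Finset (Fin n) := {i | R i j}

def blocks (n : ℕ) : Finset (Finset (Fin n)) := univ.image (blockOf R n)

def sortedBlockSizes (n : ℕ) : List ℕ := ((blocks R n).val.map Finset.card).sort (· ≥ ·)

lemma coe_sortedBlockSizes (n : ℕ) :
    (sortedBlockSizes R n : Multiset ℕ) = (blocks R n).val.map Finset.card :=
  Multiset.sort_eq _ _

lemma rankedSize_eq_getD (n i : ℕ) : rankedSize R n i = (sortedBlockSizes R n).getD i 0 := rfl

lemma hasSum_rankedSize {M : Type*} [AddCommMonoid M] [TopologicalSpace M] (G : ℕ → M)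
    (hG : G 0 = 0) (n : ℕ) :
    HasSum (fun i => G (rankedSize R n i)) (∑ b ∈ blocks R n, G b.card) := by
  set l := sortedBlockSizes R n
  have hsum : ∑ b ∈ blocks R n, G b.card = ∑ i ∈ range l.length, G (rankedSize R n i) :=
    calc ∑ b ∈ blocks R n, G b.card = (l.map G).sum := by
          rw [← Multiset.sum_coe, ← Multiset.map_coe, coe_sortedBlockSizes, Multiset.map_map]
          rfl
      _ = _ := by
          rw [Finset.sum_range, ← Fin.sum_univ_fun_getElem]
          exact sum_congr rfl fun i _ => by rw [rankedSize_eq_getD, List.getD_eq_getElem]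
  rw [hsum]
  refine hasSum_sum_of_ne_finset_zero fun i hi => ?_
  rw [rankedSize_eq_getD, List.getD_eq_default _ _ (by simpa using hi), hG]

lemma rankedSize_antitone (n : ℕ) : Antitone (rankedSize R n) := by
  intro i j hij
  rw [rankedSize_eq_getD, rankedSize_eq_getD]
  rcases lt_or_ge j (sortedBlockSizes R n).length with hj | hj
  · rw [List.getD_eq_getElem _ _ hj, List.getD_eq_getElem _ _ (hij.trans_lt hj)]
    rcases hij.eq_or_lt with rfl | h
    · exact le_rfl
    · exact (Multiset.pairwise_sort _ (· ≥ ·)).rel_get_of_lt (by exact h)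
  · simp only [List.getD_eq_default _ _ hj, zero_le]

variable {R}

lemma blockOf_eq_iff (hR : Equivalence fun i j => R i j = true) {n : ℕ} {j j' : Fin n} :
    blockOf R n j = blockOf R n j' ↔ R j j' := by
  constructor
  · intro h
    have : j ∈ blockOf R n j' := h ▸ by simp [blockOf, hR.refl]
    simpa [blockOf] using this
  · intro h
    ext i
    simp only [blockOf, mem_filter, mem_univ, true_and]
    exact ⟨fun hi => hR.trans hi h, fun hi => hR.trans hi (hR.symm h)⟩

lemma sum_card_blocks_le (hR : Equivalence fun i j => R i j = true) (n : ℕ) :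
    ∑ b ∈ blocks R n, b.card ≤ n := by
  classical
  have hdisj : (blocks R n : Set (Finset (Fin n))).PairwiseDisjoint id := by
    simp only [blocks, coe_image, coe_univ, Set.image_univ]
    rintro _ ⟨j, rfl⟩ _ ⟨j', rfl⟩ hne
    refine disjoint_left.2 fun i hi hi' => hne ((blockOf_eq_iff hR).2 ?_)
    simp only [id, blockOf, mem_filter, mem_univ, true_and] at hi hi'
    exact hR.trans (hR.symm hi) hi'
  calc ∑ b ∈ blocks R n, b.card = ((blocks R n).biUnion id).card := (card_biUnion hdisj).symm
    _ ≤ n := by simpa using card_le_univ ((blocks R n).biUnion id)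

lemma sum_comp_card_blockOf (hR : Equivalence fun i j => R i j = true)
    {M : Type*} [AddCommMonoid M] (F : ℕ → M) (n : ℕ) :
    ∑ j : Fin n, F (blockOf R n j).card = ∑ b ∈ blocks R n, b.card • F b.card := by
  classical
  refine (sum_image' _ fun j _ => ?_).symm
  have hfiber : ({j' | blockOf R n j' = blockOf R n j} : Finset (Fin n)) = blockOf R n j := by
    ext j'
    rw [mem_filter, blockOf_eq_iff hR]
    simp [blockOf]
  rw [sum_congr rfl fun j' hj' => by rw [(mem_filter.1 hj').2], sum_const, hfiber]

end Blocks

section MassPartitions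

noncomputable def rankedFreq (R : ℕ → ℕ → Bool) (n i : ℕ) : ℝ := rankedSize R n i / n

/-- Membership in Kingman's space `S_{≤1}` of ranked mass partitions. -/
structure IsMassPartition (x : ℕ → ℝ) : Prop where
  antitone : Antitone x
  nonneg : ∀ i, 0 ≤ x i
  sum_range_le_one : ∀ M, ∑ i ∈ range M, x i ≤ 1

lemma isClosed_setOf_isMassPartition : IsClosed {x : ℕ → ℝ | IsMassPartition x} := by
  have : {x : ℕ → ℝ | IsMassPartition x} = {x | Antitone x} ∩
      ((⋂ i, {x | 0 ≤ x i}) ∩ ⋂ M, {x | ∑ i ∈ range M, x i ≤ 1}) := by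
    ext x
    simp only [Set.mem_ofPred_eq, Set.mem_inter_iff, Set.mem_iInter]
    exact ⟨fun h => ⟨h.1, h.2, h.3⟩, fun h => ⟨h.1, h.2.1, h.2.2⟩⟩
  rw [this]
  exact isClosed_antitone.inter <|
    (isClosed_iInter fun i => isClosed_le continuous_const (continuous_apply i)).inter <|
    isClosed_iInter fun M =>
      isClosed_le (continuous_finsetSum _ fun i _ => continuous_apply i) continuous_const

lemma isMassPartition_rankedFreq {R : ℕ → ℕ → Bool} (hR : Equivalence fun i j => R i j = true)
    (n : ℕ) : IsMassPartition (rankedFreq R n) := by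
  refine ⟨fun i j hij => ?_, fun i => by unfold rankedFreq; positivity, fun M => ?_⟩
  · unfold rankedFreq
    gcongr
    exact rankedSize_antitone R n hij
  · have hsum : ∑ i ∈ range M, (rankedSize R n i : ℝ) ≤ n :=
      calc ∑ i ∈ range M, (rankedSize R n i : ℝ) ≤ ∑ b ∈ blocks R n, (b.card : ℝ) :=
            sum_le_hasSum _ (fun i _ => by positivity)
              (hasSum_rankedSize R Nat.cast Nat.cast_zero n)
        _ ≤ n := mod_cast sum_card_blocks_le hR n
    calc ∑ i ∈ range M, rankedFreq R n i = (∑ i ∈ range M, (rankedSize R n i : ℝ)) / n :=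
          (sum_div ..).symm
      _ ≤ n / n := by gcongr
      _ ≤ 1 := div_self_le_one _

lemma isMassPartition_of_tendsto {R : ℕ → ℕ → Bool} (hR : Equivalence fun i j => R i j = true)
    {x : ℕ → ℝ} (hx : ∀ i, Tendsto (fun n => rankedFreq R n i) atTop (𝓝 (x i))) :
    IsMassPartition x :=
  isClosed_setOf_isMassPartition.mem_of_tendsto (tendsto_pi_nhds.2 hx)
    (Eventually.of_forall (isMassPartition_rankedFreq hR))

namespace IsMassPartition

variable {x : ℕ → ℝ}

lemma le_one_div_succ (hx : IsMassPartition x) (i : ℕ) : x i ≤ 1 / (i + 1) := by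
  rw [le_div_iff₀ (by positivity), mul_comm]
  calc (i + 1 : ℝ) * x i = ∑ _j ∈ range (i + 1), x i := by simp
    _ ≤ ∑ j ∈ range (i + 1), x j :=
        sum_le_sum fun j hj => hx.antitone (Nat.lt_succ_iff.1 (mem_range.1 hj))
    _ ≤ 1 := hx.sum_range_le_one _

lemma le_one (hx : IsMassPartition x) (i : ℕ) : x i ≤ 1 :=
  (hx.le_one_div_succ i).trans <| by
    rw [div_le_one (by positivity)]
    linarith [(i.cast_nonneg : (0:ℝ) ≤ i)]

lemma summable (hx : IsMassPartition x) : Summable x :=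
  summable_of_sum_range_le hx.nonneg hx.sum_range_le_one

lemma tsum_le_one (hx : IsMassPartition x) : ∑' i, x i ≤ 1 :=
  Real.tsum_le_of_sum_range_le hx.nonneg hx.sum_range_le_one

end IsMassPartition

end MassPartitions

section HitProb

/-- The probability that the first of `m + 1` independent draws lands in a given block of mass
`x` and so does at least one of the other `m`. -/
def hitProb (m : ℕ) (x : ℝ) : ℝ := x * (1 - (1 - x) ^ m)

variable {m : ℕ} {x : ℝ}

lemma continuous_hitProb (m : ℕ) : Continuous (hitProb m) := by
  unfold hitProb; fun_prop

lemma hitProb_nonneg (h0 : 0 ≤ x) (h1 : x ≤ 1) : 0 ≤ hitProb m x :=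
  mul_nonneg h0 (sub_nonneg.2 (pow_le_one₀ (by linarith) (by linarith)))

lemma hitProb_le_self (h0 : 0 ≤ x) (h1 : x ≤ 1) : hitProb m x ≤ x :=
  mul_le_of_le_one_right h0 (sub_le_self _ (pow_nonneg (by linarith) m))

lemma hitProb_le_mul_sq (h0 : 0 ≤ x) (h1 : x ≤ 1) : hitProb m x ≤ m * x ^ 2 := by
  have bernoulli : 1 - m * x ≤ (1 - x) ^ m := by
    simpa [sub_eq_add_neg] using one_add_mul_le_pow (a := -x) (by linarith) m
  calc hitProb m x ≤ x * (m * x) := mul_le_mul_of_nonneg_left (by linarith) h0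
    _ = m * x ^ 2 := by ring

lemma tendsto_hitProb_atTop (h0 : 0 ≤ x) (h1 : x ≤ 1) :
    Tendsto (fun m => hitProb m x) atTop (𝓝 x) := by
  rcases h0.eq_or_lt with rfl | hpos
  · simp [hitProb]
  · have hpow := tendsto_pow_atTop_nhds_zero_of_lt_one (sub_nonneg.2 h1) (by linarith : 1 - x < 1)
    simpa [hitProb] using (hpow.const_sub 1).const_mul x

namespace IsMassPartition

variable {x : ℕ → ℝ}

lemma summable_hitProb (hx : IsMassPartition x) (m : ℕ) : Summable fun i => hitProb m (x i) :=
  hx.summable.of_nonneg_of_le (fun i => hitProb_nonneg (hx.nonneg i) (hx.le_one i))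
    (fun i => hitProb_le_self (hx.nonneg i) (hx.le_one i))

lemma norm_tsum_hitProb_le_one (hx : IsMassPartition x) (m : ℕ) :
    ‖∑' i, hitProb m (x i)‖ ≤ 1 := by
  rw [Real.norm_of_nonneg (tsum_nonneg fun i => hitProb_nonneg (hx.nonneg i) (hx.le_one i))]
  exact ((hx.summable_hitProb m).tsum_le_tsum
    (fun i => hitProb_le_self (hx.nonneg i) (hx.le_one i)) hx.summable).trans hx.tsum_le_one

lemma tendsto_tsum_hitProb_atTop (hx : IsMassPartition x) :
    Tendsto (fun m => ∑' i, hitProb m (x i)) atTop (𝓝 (∑' i, x i)) := by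
  refine tendsto_tsum_of_dominated_convergence hx.summable
    (fun i => tendsto_hitProb_atTop (hx.nonneg i) (hx.le_one i))
    (Eventually.of_forall fun m i => ?_)
  rw [Real.norm_of_nonneg (hitProb_nonneg (hx.nonneg i) (hx.le_one i))]
  exact hitProb_le_self (hx.nonneg i) (hx.le_one i)

end IsMassPartition

/-- The `i`-th terms are dominated by `m / (i + 1) ^ 2`, uniformly on `S_{≤1}`. -/
lemma tendsto_tsum_hitProb {x : ℕ → ℕ → ℝ} {y : ℕ → ℝ} (hx : ∀ n, IsMassPartition (x n))
    (hlim : ∀ i, Tendsto (fun n => x n i) atTop (𝓝 (y i))) (m : ℕ) :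
    Tendsto (fun n => ∑' i, hitProb m (x n i)) atTop (𝓝 (∑' i, hitProb m (y i))) := by
  have hsq : Summable fun i : ℕ => (m : ℝ) * (1 / ((i : ℝ) + 1)) ^ 2 := by
    refine Summable.mul_left _ ?_
    simpa [div_pow] using (summable_nat_add_iff 1).2 (Real.summable_one_div_nat_pow.2 one_lt_two)
  refine tendsto_tsum_of_dominated_convergence hsq
    (fun i => ((continuous_hitProb m).tendsto (y i)).comp (hlim i))
    (Eventually.of_forall fun n i => ?_)
  have h0 := (hx n).nonneg i
  rw [Real.norm_of_nonneg (hitProb_nonneg h0 ((hx n).le_one i))]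
  calc hitProb m (x n i) ≤ m * x n i ^ 2 := hitProb_le_mul_sq h0 ((hx n).le_one i)
    _ ≤ m * (1 / ((i : ℝ) + 1)) ^ 2 := by gcongr; exact (hx n).le_one_div_succ i

end HitProb

section LinkFraction

lemma card_filter_exists_succ_mem {α : Type*} [Fintype α] [DecidableEq α] (S : α → Finset α)
    (m : ℕ) :
    (#{t : Fin (m + 1) → α | ∃ l : Fin m, t l.succ ∈ S (t 0)} : ℝ) =
      ∑ a, ((Fintype.card α : ℝ) ^ m - ((Fintype.card α : ℝ) - #(S a)) ^ m) := by
  have hcons : #{t : Fin (m + 1) → α | ∃ l : Fin m, t l.succ ∈ S (t 0)} =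
      ∑ a, #{v : Fin m → α | ∃ l, v l ∈ S a} := by
    simp only [card_filter]
    rw [← Fintype.sum_equiv (Fin.consEquiv fun _ => α) _ _ fun _ => rfl, Fintype.sum_prod_type]
    simp [Fin.consEquiv]
  have hmiss (a : α) : #{v : Fin m → α | ∃ l, v l ∈ S a} + (Fintype.card α - #(S a)) ^ m =
      Fintype.card α ^ m := by
    have hcompl : ({v : Fin m → α | ¬∃ l, v l ∈ S a} : Finset _) =
        Fintype.piFinset fun _ => (S a)ᶜ := by
      ext v; simp
    have := card_filter_add_card_filter_not (s := univ) (fun v : Fin m → α => ∃ l, v l ∈ S a)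
    rwa [hcompl, Fintype.card_piFinset, prod_const, card_compl, card_univ, card_univ,
      Fintype.card_fun, Fintype.card_fin] at this
  push_cast [hcons]
  refine sum_congr rfl fun a _ => ?_
  have hle : #(S a) ≤ Fintype.card α := card_le_univ _
  have := congrArg (Nat.cast : ℕ → ℝ) (hmiss a)
  push_cast [Nat.cast_sub hle] at this
  linarith

noncomputable def linkFraction (R : ℕ → ℕ → Bool) (m n : ℕ) : ℝ :=
  #{t : Fin (m + 1) → Fin n | ∃ l : Fin m, R (t 0) (t l.succ)} / (n : ℝ) ^ (m + 1)

lemma linkFraction_eq_tsum_hitProb {R : ℕ → ℕ → Bool} (hR : Equivalence fun i j => R i j = true)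
    (m n : ℕ) : linkFraction R m n = ∑' i, hitProb m (rankedFreq R n i) := by
  have hmem (t : Fin (m + 1) → Fin n) (l : Fin m) :
      R (t 0) (t l.succ) = true ↔ t l.succ ∈ blockOf R n (t 0) := by
    simp only [blockOf, mem_filter, mem_univ, true_and]
    exact ⟨hR.symm, hR.symm⟩
  have hcount : linkFraction R m n = ∑ j : Fin n,
      ((n : ℝ) ^ m - ((n : ℝ) - (blockOf R n j).card) ^ m) / (n : ℝ) ^ (m + 1) := by
    rw [linkFraction, filter_congr fun t _ => exists_congr (hmem t),
      card_filter_exists_succ_mem, Fintype.card_fin, sum_div]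
  rw [hcount, sum_comp_card_blockOf hR fun c => ((n : ℝ) ^ m - (n - c) ^ m) / (n : ℝ) ^ (m + 1)]
  refine ((hasSum_rankedSize R (fun c => hitProb m (c / n)) (by simp [hitProb]) n).tsum_eq.trans
    (sum_congr rfl fun b hb => ?_)).symm
  obtain ⟨j, -, rfl⟩ := mem_image.1 hb
  have hn : (n : ℝ) ≠ 0 := by have := j.pos; positivity
  rw [hitProb, nsmul_eq_mul, one_sub_div hn, div_pow, pow_succ]
  field_simp

lemma norm_linkFraction_le_one {R : ℕ → ℕ → Bool} (hR : Equivalence fun i j => R i j = true)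
    (m n : ℕ) : ‖linkFraction R m n‖ ≤ 1 := by
  rw [linkFraction_eq_tsum_hitProb hR]
  exact (isMassPartition_rankedFreq hR n).norm_tsum_hitProb_le_one m

lemma tendsto_card_filter_not_injective_div (k : ℕ) :
    Tendsto (fun n => (#{t : Fin k → Fin n | ¬Function.Injective t} : ℝ) / (n : ℝ) ^ k)
      atTop (𝓝 0) := by
  have hcard (n : ℕ) : (#{t : Fin k → Fin n | ¬Function.Injective t} : ℝ) =
      (n : ℝ) ^ k - n.descFactorial k := by
    have hinj : #{t : Fin k → Fin n | Function.Injective t} = n.descFactorial k := by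
      rw [← Fintype.card_subtype,
        Fintype.card_congr (Equiv.subtypeInjectiveEquivEmbedding (Fin k) (Fin n))]
      simp [Fintype.card_embedding_eq]
    have := card_filter_add_card_filter_not (s := univ) fun t : Fin k → Fin n =>
      Function.Injective t
    rw [hinj, card_univ, Fintype.card_fun, Fintype.card_fin, Fintype.card_fin] at this
    rw [eq_sub_iff_add_eq, add_comm]
    exact_mod_cast this
  have hne : ∀ᶠ n : ℕ in atTop, (n : ℝ) ^ k ≠ 0 :=
    eventually_ge_atTop 1 |>.mono fun n hn => pow_ne_zero _ (by positivity)
  have hdesc := (Asymptotics.isEquivalent_iff_tendsto_one hne).1 (isEquivalent_descFactorial k)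
  rw [← sub_self (1 : ℝ)]
  refine (hdesc.const_sub 1).congr' ?_
  filter_upwards [hne] with n hn
  simp [hcard, sub_div, div_self hn]

end LinkFraction

section Probability

variable {Ω : Type*} {R : Ω → ℕ → ℕ → Bool}

def linkEvent (R : Ω → ℕ → ℕ → Bool) {m : ℕ} (t : Fin (m + 1) → ℕ) : Set Ω :=
  {ω | ∃ l : Fin m, R ω (t 0) (t l.succ)}

def zeroLinked (R : Ω → ℕ → ℕ → Bool) (m : ℕ) : Set Ω := linkEvent R fun i : Fin (m + 1) => i

lemma mem_zeroLinked {m : ℕ} {ω : Ω} : ω ∈ zeroLinked R m ↔ ∃ l < m, R ω 0 (l + 1) := by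
  simp [zeroLinked, linkEvent, Fin.exists_iff]

lemma linkFraction_eq_sum_indicator (m n : ℕ) (ω : Ω) :
    linkFraction (R ω) m n = (∑ t : Fin (m + 1) → Fin n,
      (linkEvent R fun i => t i).indicator 1 ω) / (n : ℝ) ^ (m + 1) := by
  rw [linkFraction, natCast_card_filter]
  congr 1
  refine sum_congr rfl fun t _ => ?_
  simp [Set.indicator_apply, linkEvent]

variable [MeasurableSpace Ω] {P : Measure Ω}

def IsExchangeable (P : Measure Ω) (R : Ω → ℕ → ℕ → Bool) : Prop :=
  ∀ (k : ℕ) (σ : Equiv.Perm (Fin k)),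
    Measure.map (fun ω => fun p : Fin k × Fin k => R ω (σ p.1) (σ p.2)) P
      = Measure.map (fun ω => fun p : Fin k × Fin k => R ω p.1 p.2) P

lemma measurable_relabel (hRmeas : Measurable R) {k : ℕ} (t : Fin k → ℕ) :
    Measurable fun ω => fun p : Fin k × Fin k => R ω (t p.1) (t p.2) :=
  measurable_pi_lambda _ fun _ => (measurable_pi_apply _).comp ((measurable_pi_apply _).comp hRmeas)

lemma measurableSet_linkEvent (hRmeas : Measurable R) {m : ℕ} (t : Fin (m + 1) → ℕ) :
    MeasurableSet (linkEvent R t) :=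
  measurable_relabel hRmeas t
    (Set.to_countable {g : Fin (m + 1) × Fin (m + 1) → Bool | ∃ l : Fin m, g (0, l.succ)}
      |>.measurableSet)

lemma IsExchangeable.map_relabel_eq (hexch : IsExchangeable P R) (hRmeas : Measurable R)
    {k n : ℕ} (t : Fin k → Fin n) (ht : Function.Injective t) :
    P.map (fun ω => fun p : Fin k × Fin k => R ω (t p.1) (t p.2)) =
      P.map (fun ω => fun p : Fin k × Fin k => R ω p.1 p.2) := by
  have hk : k ≤ n := by simpa using Fintype.card_le_of_injective t ht
  obtain ⟨σ, hσ⟩ := Equiv.Perm.exists_extending_pair _ _ (Fin.castLE_injective hk) ht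
  let restrict : (Fin n × Fin n → Bool) → Fin k × Fin k → Bool :=
    fun g p => g (Fin.castLE hk p.1, Fin.castLE hk p.2)
  have hrestrict : Measurable restrict := measurable_pi_lambda _ fun _ => measurable_pi_apply _
  have := congrArg (Measure.map restrict) (hexch n σ)
  rw [Measure.map_map hrestrict (measurable_relabel hRmeas fun i => (σ i : ℕ)),
    Measure.map_map hrestrict (measurable_relabel hRmeas _)] at this
  simpa [restrict, Function.comp_def, hσ] using this

lemma IsExchangeable.measure_linkEvent (hexch : IsExchangeable P R) (hRmeas : Measurable R)
    {m n : ℕ} (t : Fin (m + 1) → Fin n) (ht : Function.Injective t) :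
    P (linkEvent R fun i => t i) = P (zeroLinked R m) := by
  have hA : MeasurableSet {g : Fin (m + 1) × Fin (m + 1) → Bool | ∃ l : Fin m, g (0, l.succ)} :=
    Set.to_countable _ |>.measurableSet
  calc P (linkEvent R fun i => t i)
      = P.map (fun ω => fun p : Fin (m + 1) × Fin (m + 1) => R ω (t p.1) (t p.2)) _ := by
        rw [Measure.map_apply (measurable_relabel hRmeas fun i => (t i : ℕ)) hA]; rfl
    _ = P.map (fun ω => fun p : Fin (m + 1) × Fin (m + 1) => R ω p.1 p.2) _ := by
        rw [hexch.map_relabel_eq hRmeas t ht]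
    _ = P (zeroLinked R m) := by
        rw [Measure.map_apply (measurable_relabel hRmeas fun i => (i : ℕ)) hA]; rfl

lemma measurable_linkFraction (hRmeas : Measurable R) (m n : ℕ) :
    Measurable fun ω => linkFraction (R ω) m n := by
  simp_rw [linkFraction_eq_sum_indicator]
  exact (Finset.measurable_sum _ fun t _ =>
    measurable_const.indicator (measurableSet_linkEvent hRmeas _)).div_const _

lemma integral_linkFraction [IsFiniteMeasure P] (hRmeas : Measurable R) (m n : ℕ) :
    ∫ ω, linkFraction (R ω) m n ∂P =
      (∑ t : Fin (m + 1) → Fin n, P.real (linkEvent R fun i => t i)) / (n : ℝ) ^ (m + 1) := by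
  simp_rw [linkFraction_eq_sum_indicator, integral_div]
  rw [integral_finsetSum _ fun t _ =>
    (integrable_const 1).indicator (measurableSet_linkEvent hRmeas _)]
  simp_rw [integral_indicator_one (measurableSet_linkEvent hRmeas _)]

lemma IsExchangeable.tendsto_integral_linkFraction [IsProbabilityMeasure P]
    (hexch : IsExchangeable P R) (hRmeas : Measurable R) (m : ℕ) :
    Tendsto (fun n => ∫ ω, linkFraction (R ω) m n ∂P) atTop (𝓝 (P.real (zeroLinked R m))) := by
  set q := P.real (zeroLinked R m)
  have hbound (n : ℕ) (hn : n ≠ 0) : |∫ ω, linkFraction (R ω) m n ∂P - q| ≤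
      #{t : Fin (m + 1) → Fin n | ¬Function.Injective t} / (n : ℝ) ^ (m + 1) := by
    have hN : (0 : ℝ) < (n : ℝ) ^ (m + 1) := by positivity
    have hcentre : ∫ ω, linkFraction (R ω) m n ∂P - q =
        (∑ t : Fin (m + 1) → Fin n, (P.real (linkEvent R fun i => t i) - q)) /
          (n : ℝ) ^ (m + 1) := by
      rw [integral_linkFraction hRmeas, sum_sub_distrib, sum_const, card_univ, Fintype.card_fun,
        Fintype.card_fin, Fintype.card_fin, nsmul_eq_mul]
      push_cast
      field_simp
    rw [hcentre, abs_div, abs_of_pos hN]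
    gcongr
    rw [natCast_card_filter]
    refine (abs_sum_le_sum_abs _ _).trans (sum_le_sum fun t _ => ?_)
    split_ifs with ht
    · rw [measureReal_def, hexch.measure_linkEvent hRmeas t ht, ← measureReal_def,
        sub_self, abs_zero]
    · exact abs_sub_le_of_nonneg_of_le measureReal_nonneg measureReal_le_one measureReal_nonneg
        measureReal_le_one
  rw [tendsto_iff_norm_sub_tendsto_zero]
  refine squeeze_zero' (Eventually.of_forall fun n => norm_nonneg _) ?_
    (tendsto_card_filter_not_injective_div (m + 1))
  filter_upwards [eventually_ne_atTop 0] with n hn using hbound n hn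

lemma tendsto_measureReal_zeroLinked [IsProbabilityMeasure P]
    (hno : ∀ᵐ ω ∂P, ∃ j, j ≠ 0 ∧ R ω 0 j = true) :
    Tendsto (fun m => P.real (zeroLinked R m)) atTop (𝓝 1) := by
  have hmono : Monotone (zeroLinked R) := fun a b hab ω hω => by
    obtain ⟨l, hl, h⟩ := mem_zeroLinked.1 hω
    exact mem_zeroLinked.2 ⟨l, hl.trans_le hab, h⟩
  have hfull : P (⋃ m, zeroLinked R m) = 1 := by
    refine (measure_congr (ae_eq_univ.2 (ae_iff.1 ?_))).trans measure_univ
    filter_upwards [hno] with ω ⟨j, hj, hR⟩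
    refine Set.mem_iUnion.2 ⟨j, mem_zeroLinked.2 ⟨j - 1, by omega, ?_⟩⟩
    rwa [Nat.sub_add_cancel (Nat.one_le_iff_ne_zero.2 hj)]
  have := tendsto_measure_iUnion_atTop (μ := P) hmono
  rw [hfull] at this
  exact (ENNReal.tendsto_toReal ENNReal.one_ne_top).comp this

end Probability

section Frequencies

variable {Ω : Type*} [MeasurableSpace Ω] {P : Measure Ω} {R : Ω → ℕ → ℕ → Bool}
  {f : Ω → ℕ → ℝ}

lemma tendsto_linkFraction_ae (hEquiv : ∀ᵐ ω ∂P, Equivalence fun i j => R ω i j = true)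
    (hfreq : ∀ᵐ ω ∂P, ∀ i, Tendsto (fun n => rankedFreq (R ω) n i) atTop (𝓝 (f ω i))) (m : ℕ) :
    ∀ᵐ ω ∂P, Tendsto (fun n => linkFraction (R ω) m n) atTop (𝓝 (∑' i, hitProb m (f ω i))) := by
  filter_upwards [hEquiv, hfreq] with ω hR hω
  simp_rw [linkFraction_eq_tsum_hitProb hR]
  exact tendsto_tsum_hitProb (isMassPartition_rankedFreq hR) hω m

lemma aestronglyMeasurable_tsum_hitProb (hRmeas : Measurable R)
    (hEquiv : ∀ᵐ ω ∂P, Equivalence fun i j => R ω i j = true)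
    (hfreq : ∀ᵐ ω ∂P, ∀ i, Tendsto (fun n => rankedFreq (R ω) n i) atTop (𝓝 (f ω i))) (m : ℕ) :
    AEStronglyMeasurable (fun ω => ∑' i, hitProb m (f ω i)) P :=
  aestronglyMeasurable_of_tendsto_ae _
    (fun n => (measurable_linkFraction hRmeas m n).aestronglyMeasurable)
    (tendsto_linkFraction_ae hEquiv hfreq m)

lemma integral_tsum_hitProb [IsProbabilityMeasure P] (hRmeas : Measurable R)
    (hEquiv : ∀ᵐ ω ∂P, Equivalence fun i j => R ω i j = true) (hexch : IsExchangeable P R)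
    (hfreq : ∀ᵐ ω ∂P, ∀ i, Tendsto (fun n => rankedFreq (R ω) n i) atTop (𝓝 (f ω i))) (m : ℕ) :
    ∫ ω, ∑' i, hitProb m (f ω i) ∂P = P.real (zeroLinked R m) := by
  have hbound (n : ℕ) : ∀ᵐ ω ∂P, ‖linkFraction (R ω) m n‖ ≤ 1 := by
    filter_upwards [hEquiv] with ω hR using norm_linkFraction_le_one hR m n
  exact tendsto_nhds_unique
    (tendsto_integral_of_dominated_convergence _
      (fun n => (measurable_linkFraction hRmeas m n).aestronglyMeasurable)
      (integrable_const 1) hbound (tendsto_linkFraction_ae hEquiv hfreq m))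
    (hexch.tendsto_integral_linkFraction hRmeas m)

end Frequencies

end ExchangeablePartition

open ExchangeablePartition

/-- If `Π` is an exchangeable random partition of `ℕ` (encoded by a random
equivalence relation `R`) whose asymptotic ranked frequencies are `f`, and if almost
surely the singleton `{1}` (element `0` here) is not a block of `Π`, then the asymptotic
ranked frequencies sum to `1` almost surely. -/
theorem stmt_9 {Ω : Type*} [MeasurableSpace Ω] (P : Measure Ω) [IsProbabilityMeasure P]
    (R : Ω → ℕ → ℕ → Bool) (hRmeas : Measurable R)
    (hEquiv : ∀ᵐ ω ∂P, Equivalence fun i j => R ω i j = true)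
    (hexch : ∀ (k : ℕ) (σ : Equiv.Perm (Fin k)),
      Measure.map (fun ω => fun p : Fin k × Fin k => R ω (σ p.1) (σ p.2)) P
        = Measure.map (fun ω => fun p : Fin k × Fin k => R ω p.1 p.2) P)
    (f : Ω → ℕ → ℝ)
    (hfreq : ∀ᵐ ω ∂P, ∀ i,
      Tendsto (fun k => (rankedSize (R ω) k i : ℝ) / k) atTop (𝓝 (f ω i)))
    (hnosingleton : ∀ᵐ ω ∂P, ∃ j, j ≠ 0 ∧ R ω 0 j = true) :
    ∀ᵐ ω ∂P, ∑' i, f ω i = 1 := by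
  have hmass : ∀ᵐ ω ∂P, IsMassPartition (f ω) := by
    filter_upwards [hEquiv, hfreq] with ω hR hω using isMassPartition_of_tendsto hR hω
  have hlim : ∀ᵐ ω ∂P, Tendsto (fun m => ∑' i, hitProb m (f ω i)) atTop (𝓝 (∑' i, f ω i)) := by
    filter_upwards [hmass] with ω hω using hω.tendsto_tsum_hitProb_atTop
  have hmeas := aestronglyMeasurable_tsum_hitProb hRmeas hEquiv hfreq
  have hintegral : ∫ ω, ∑' i, f ω i ∂P = 1 := by
    refine tendsto_nhds_unique (tendsto_integral_of_dominated_convergence _ hmeas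
      (integrable_const 1) (fun m => ?_) hlim) ?_
    · filter_upwards [hmass] with ω hω using hω.norm_tsum_hitProb_le_one m
    · simpa only [integral_tsum_hitProb hRmeas hEquiv hexch hfreq] using
        tendsto_measureReal_zeroLinked hnosingleton
  have hle : ∀ᵐ ω ∂P, ∑' i, f ω i ≤ 1 := by
    filter_upwards [hmass] with ω hω using hω.tsum_le_one
  have hintegrable : Integrable (fun ω => ∑' i, f ω i) P := by
    refine (integrable_const 1).mono' (aestronglyMeasurable_of_tendsto_ae _ hmeas hlim) ?_
    filter_upwards [hmass] with ω hω
    rw [Real.norm_of_nonneg (tsum_nonneg hω.nonneg)]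
    exact hω.tsum_le_one
  exact (integral_eq_iff_of_ae_le hintegrable (integrable_const 1) hle).1 (by simpa using hintegral)
end

section
/- Let X₁, ..., X_n be independent random variables and S_k = X₁ + ... + X_k. Then for every ε > 0, P(max_{1≤k≤n} |S_k| ≥ 3ε) ≤ 3 max_{1≤k≤n} P(|S_k| ≥ ε). -/
/-!
Let `B k` be the event that `|S_k| ≥ 3ε` for the first time at `k`; these are disjoint and
cover the event on the left. On `B k`, either `|S_n| ≥ ε`, or else `|S_n - S_k| ≥ 2ε`; the
latter event depends only on `X_k, …, X_{n-1}` and is therefore independent of `B k`, and its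
probability is at most `P(|S_n| ≥ ε) + P(|S_k| ≥ ε)`. Summing over `k` gives
`P(max |S_k| ≥ 3ε) ≤ P(|S_n| ≥ ε) + 2 max_k P(|S_k| ≥ ε)`.
-/

open MeasureTheory ProbabilityTheory Finset

section FirstEntrance

variable {Ω : Type*} (S : ℕ → Ω → ℝ) (t : ℝ)

def firstEntrance (k : ℕ) : Set Ω :=
  {ω | t ≤ |S k ω| ∧ ∀ j ∈ Ico 1 k, |S j ω| < t}

theorem setOf_exists_le_abs_eq_biUnion_firstEntrance (n : ℕ) :
    {ω | ∃ k ∈ Icc 1 n, t ≤ |S k ω|} = ⋃ k ∈ Icc 1 n, firstEntrance S t k := by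
  ext ω
  simp only [Set.mem_ofPred_eq, Set.mem_iUnion, exists_prop]
  constructor
  · intro h
    classical
    obtain ⟨hmem, hle⟩ := Nat.find_spec h
    refine ⟨Nat.find h, hmem, hle, fun j hj => ?_⟩
    have hj' := mem_Ico.1 hj
    have hnot := Nat.find_min h hj'.2
    push Not at hnot
    exact hnot (mem_Icc.2 ⟨hj'.1, by have := (mem_Icc.1 hmem).2; omega⟩)
  · rintro ⟨k, hk, hkt, -⟩
    exact ⟨k, hk, hkt⟩

theorem pairwiseDisjoint_firstEntrance : (Set.Ici 1).PairwiseDisjoint (firstEntrance S t) := by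
  have key : ∀ a b, 1 ≤ a → a < b → Disjoint (firstEntrance S t a) (firstEntrance S t b) :=
    fun a b ha hab => Set.disjoint_left.2 fun _ hωa hωb =>
      (hωb.2 a (mem_Ico.2 ⟨ha, hab⟩)).not_ge hωa.1
  intro a ha b hb hab
  rcases hab.lt_or_gt with h | h
  · exact key a b ha h
  · exact (key b a hb h).symm

theorem measurableSet_firstEntrance {m : MeasurableSpace Ω} {k : ℕ}
    (hS : ∀ j ≤ k, Measurable (S j)) : MeasurableSet (firstEntrance S t k) := by
  have hdef :
      firstEntrance S t k = {ω | t ≤ |S k ω|} ∩ ⋂ j ∈ Ico 1 k, {ω | |S j ω| < t} := by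
    ext
    simp [firstEntrance]
  rw [hdef]
  exact (measurableSet_le measurable_const (hS k le_rfl).abs).inter
    (.biInter (Set.to_countable _) fun j hj =>
      measurableSet_lt (hS j (mem_Ico.1 hj).2.le).abs measurable_const)

theorem firstEntrance_add_diff_subset (s : ℝ) (n k : ℕ) :
    firstEntrance S (s + t) k \ {ω | s ≤ |S n ω|} ⊆ {ω | t ≤ |S n ω - S k ω|} := by
  rintro ω ⟨⟨hk, -⟩, hn⟩
  simp only [Set.mem_ofPred_eq, not_le] at hk hn ⊢
  linarith [abs_sub_abs_le_abs_sub (S k ω) (S n ω), abs_sub_comm (S k ω) (S n ω)]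

variable {m : MeasurableSpace Ω} (P : Measure Ω)

theorem measure_firstEntrance_add_le (s : ℝ) (n k : ℕ)
    (hC : MeasurableSet {ω | s ≤ |S n ω|})
    (hindep : IndepSet (firstEntrance S (s + t) k) {ω | t ≤ |S n ω - S k ω|} P) :
    P (firstEntrance S (s + t) k) ≤ P (firstEntrance S (s + t) k ∩ {ω | s ≤ |S n ω|}) +
      P (firstEntrance S (s + t) k) * P {ω | t ≤ |S n ω - S k ω|} := by
  set B := firstEntrance S (s + t) k
  calc P B = P (B ∩ {ω | s ≤ |S n ω|}) + P (B \ {ω | s ≤ |S n ω|}) :=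
        (measure_inter_add_sdiff _ hC).symm
    _ ≤ P (B ∩ {ω | s ≤ |S n ω|}) + P (B ∩ {ω | t ≤ |S n ω - S k ω|}) := by
        gcongr
        exact Set.subset_inter Set.sdiff_subset (firstEntrance_add_diff_subset S t s n k)
    _ = _ := by rw [hindep.measure_inter_eq_mul]

theorem measure_exists_add_le_abs_le [IsProbabilityMeasure P] (hS : ∀ k, Measurable (S k))
    (s : ℝ) (n : ℕ)
    (hindep : ∀ k ∈ Icc 1 n,
      IndepSet (firstEntrance S (s + t) k) {ω | t ≤ |S n ω - S k ω|} P) :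
    P {ω | ∃ k ∈ Icc 1 n, s + t ≤ |S k ω|} ≤
      P {ω | s ≤ |S n ω|} + (Icc 1 n).sup fun k => P {ω | t ≤ |S n ω - S k ω|} := by
  set B := firstEntrance S (s + t)
  set C := {ω | s ≤ |S n ω|}
  set M := (Icc 1 n).sup fun k => P {ω | t ≤ |S n ω - S k ω|}
  have hBmeas k : MeasurableSet (B k) := measurableSet_firstEntrance S _ fun j _ => hS j
  have hCmeas : MeasurableSet C := measurableSet_le measurable_const (hS n).abs
  have hdisj : (Icc 1 n : Set ℕ).PairwiseDisjoint B :=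
    (pairwiseDisjoint_firstEntrance S _).subset fun k hk => (mem_Icc.1 hk).1
  have hstep : ∀ k ∈ Icc 1 n, P (B k) ≤ P (B k ∩ C) + P (B k) * M := fun k hk =>
    (measure_firstEntrance_add_le S t P s n k hCmeas (hindep k hk)).trans <| by
      gcongr
      exact le_sup (f := fun k => P {ω | t ≤ |S n ω - S k ω|}) hk
  have hsumC : ∑ k ∈ Icc 1 n, P (B k ∩ C) ≤ P C := by
    rw [← measure_biUnion_finset (hdisj.mono fun k => Set.inter_subset_left)
      fun k _ => (hBmeas k).inter hCmeas]
    exact measure_mono (Set.iUnion₂_subset fun k _ => Set.inter_subset_right)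
  have hsumB : ∑ k ∈ Icc 1 n, P (B k) ≤ 1 :=
    (sum_measure_le_measure_univ (fun k _ => (hBmeas k).nullMeasurableSet)
      hdisj.aedisjoint).trans_eq measure_univ
  rw [setOf_exists_le_abs_eq_biUnion_firstEntrance,
    measure_biUnion_finset hdisj fun k _ => hBmeas k]
  calc ∑ k ∈ Icc 1 n, P (B k)
      ≤ ∑ k ∈ Icc 1 n, (P (B k ∩ C) + P (B k) * M) := sum_le_sum hstep
    _ = ∑ k ∈ Icc 1 n, P (B k ∩ C) + (∑ k ∈ Icc 1 n, P (B k)) * M := by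
        rw [sum_add_distrib, sum_mul]
    _ ≤ P C + 1 * M := by gcongr
    _ = P C + M := by rw [one_mul]

end FirstEntrance

theorem measure_add_le_abs_sub_le {Ω : Type*} {m : MeasurableSpace Ω} (P : Measure Ω)
    (f g : Ω → ℝ) (s t : ℝ) :
    P {ω | s + t ≤ |f ω - g ω|} ≤ P {ω | s ≤ |f ω|} + P {ω | t ≤ |g ω|} := by
  refine (measure_mono fun ω hω => ?_).trans (measure_union_le _ _)
  by_contra h
  simp only [Set.mem_union, Set.mem_ofPred_eq, not_or, not_le] at hω h
  linarith [abs_sub (f ω) (g ω)]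

section PartialSums

variable {Ω : Type*} {m : MeasurableSpace Ω} {X : ℕ → Ω → ℝ}

theorem measurable_sum_iSup_comap (s : Finset ℕ) {T : Set ℕ} (hs : ↑s ⊆ T) :
    Measurable[⨆ i ∈ T, MeasurableSpace.comap (X i) inferInstance]
      fun ω => ∑ i ∈ s, X i ω :=
  Finset.measurable_sum _ fun i hi =>
    (comap_measurable (X i)).mono
      (le_iSup₂ (f := fun i (_ : i ∈ T) => MeasurableSpace.comap (X i) inferInstance) i (hs hi))
      le_rfl

/-- The first entrance at `k` is determined by `X 0, …, X (k-1)`, the increment by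
`X k, …, X (n-1)`. -/
theorem ProbabilityTheory.iIndepFun.indepSet_firstEntrance_sub {P : Measure Ω}
    (hmeas : ∀ i, Measurable (X i)) (hindep : iIndepFun X P) (u t : ℝ) {k n : ℕ} (hkn : k ≤ n) :
    IndepSet (firstEntrance (fun j ω => ∑ i ∈ range j, X i ω) u k)
      {ω | t ≤ |∑ i ∈ range n, X i ω - ∑ i ∈ range k, X i ω|} P := by
  have hpast_future := indep_iSup_of_disjoint (fun i => (hmeas i).comap_le)
    ((iIndepFun_iff_iIndep _ _ _).1 hindep) (Set.Iio_disjoint_Ici (le_refl k))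
  refine hpast_future.indepSet_of_measurableSet
    (measurableSet_firstEntrance
      (m := ⨆ i ∈ Set.Iio k, MeasurableSpace.comap (X i) inferInstance) _ _
      fun j hj => measurable_sum_iSup_comap _ fun i hi => ?_) ?_
  · simp only [coe_range, Set.mem_Iio] at hi ⊢
    omega
  · simp_rw [← Finset.sum_Ico_eq_sub _ hkn]
    exact measurable_abs.comp (measurable_sum_iSup_comap _ fun i hi => (mem_Ico.1 hi).1)
      measurableSet_Ici

end PartialSums

theorem stmt_12_general {Ω : Type*} [MeasurableSpace Ω] (P : Measure Ω) [IsProbabilityMeasure P]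
    (n : ℕ) (X : ℕ → Ω → ℝ) (hmeas : ∀ i, Measurable (X i))
    (hindep : iIndepFun X P)
    (ε : ℝ) :
    P {ω | ∃ k ∈ Finset.Icc 1 n, 3 * ε ≤ |∑ i ∈ Finset.range k, X i ω|}
      ≤ 3 * (Finset.Icc 1 n).sup (fun k => P {ω | ε ≤ |∑ i ∈ Finset.range k, X i ω|}) := by
  rcases n.eq_zero_or_pos with rfl | hn
  · simp
  set S : ℕ → Ω → ℝ := fun k ω => ∑ i ∈ range k, X i ω
  set M := (Icc 1 n).sup fun k => P {ω | ε ≤ |S k ω|}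
  have hn_mem : n ∈ Icc 1 n := mem_Icc.2 ⟨hn, le_rfl⟩
  have hM : ∀ k ∈ Icc 1 n, P {ω | ε ≤ |S k ω|} ≤ M := fun k hk =>
    le_sup (f := fun k => P {ω | ε ≤ |S k ω|}) hk
  have hincrement : ∀ k ∈ Icc 1 n, P {ω | ε + ε ≤ |S n ω - S k ω|} ≤ 2 * M :=
    fun k hk => (measure_add_le_abs_sub_le P (S n) (S k) ε ε).trans <| by
      rw [two_mul]
      exact add_le_add (hM n hn_mem) (hM k hk)
  have hmax := measure_exists_add_le_abs_le S (ε + ε) P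
    (fun k => Finset.measurable_sum _ fun i _ => hmeas i) ε n
    fun k hk => hindep.indepSet_firstEntrance_sub hmeas _ _ (mem_Icc.1 hk).2
  calc P {ω | ∃ k ∈ Icc 1 n, 3 * ε ≤ |S k ω|}
      = P {ω | ∃ k ∈ Icc 1 n, ε + (ε + ε) ≤ |S k ω|} := by ring_nf
    _ ≤ M + 2 * M :=
        hmax.trans (add_le_add (hM n hn_mem) (Finset.sup_le hincrement))
    _ = 3 * M := by ring

/-- Etemadi's maximal inequality: for independent `X₁,…,Xₙ` and partial
sums `S_k`, `P(max_{1≤k≤n} |S_k| ≥ 3ε) ≤ 3 max_{1≤k≤n} P(|S_k| ≥ ε)`. -/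
theorem stmt_12 {Ω : Type*} [MeasurableSpace Ω] (P : Measure Ω) [IsProbabilityMeasure P]
    (n : ℕ) (X : ℕ → Ω → ℝ) (hmeas : ∀ i, Measurable (X i))
    (hindep : iIndepFun X P)
    (ε : ℝ) (hε : 0 < ε) :
    P {ω | ∃ k ∈ Finset.Icc 1 n, 3 * ε ≤ |∑ i ∈ Finset.range k, X i ω|}
      ≤ 3 * (Finset.Icc 1 n).sup (fun k => P {ω | ε ≤ |∑ i ∈ Finset.range k, X i ω|}) :=
  stmt_12_general P n X hmeas hindep ε
end
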